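/- arXiv:2604.26603 — 6 statements merged into one kernel-verified Lean document; each statement's English description precedes it below -/
import Mathlib

section
/- Let α be a real number and let l, r be integers with l > r ≥ 0. Then the generalized Fibonacci numbers satisfy F_{α,l}·F_{α,r+1} − F_{α,l+1}·F_{α,r} = (1−α)^{r+1}·F_{α,l−r−1}. -/
attribute [local instance] Classical.propDecidable

open Matrix

/-- Generalized Fibonacci sequence: `F_{α,0} = 1`, `F_{α,1} = 1`,
`F_{α,k} = F_{α,k-1} + (α-1)·F_{α,k-2}`. -/
noncomputable def genFib (α : ℝ) : ℕ → ℝ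
  | 0 => 1
  | 1 => 1
  | k + 2 => genFib α (k + 1) + (α - 1) * genFib α k

/-- Walk matrix of an `r × r` real matrix `B`: columns `e, B e, B² e, …, B^{r-1} e`. -/
noncomputable def walkMatrix {r : ℕ} (B : Matrix (Fin r) (Fin r) ℝ) :
    Matrix (Fin r) (Fin r) ℝ :=
  fun i k => ((B ^ (k : ℕ)) *ᵥ (fun _ => (1 : ℝ))) i

/-- The Pascal-type quotient matrix `P[m,n]`, indexed by `1, …, n-1` (here `i ↦ i.val + 1`):
`(i,j)`-entry is `C(i, n-j)·(m-1)^{n-j}` if `i + j ≥ n`, else `0`. -/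
noncomputable def Pmat (m n : ℕ) : Matrix (Fin (n - 1)) (Fin (n - 1)) ℝ :=
  fun i j =>
    if n ≤ (i.val + 1) + (j.val + 1) then
      (Nat.choose (i.val + 1) (n - (j.val + 1)) : ℝ) * ((m : ℝ) - 1) ^ (n - (j.val + 1))
    else 0

/-- The Pascal-type quotient matrix `Q[m,n]`, indexed by `1, …, n-1` (here `i ↦ i.val + 1`):
`(i,j)`-entry is `C(i-1, n-j-1)·(m-1)^{n-j}` if `i + j ≥ n`, else `0`. -/
noncomputable def Qmat (m n : ℕ) : Matrix (Fin (n - 1)) (Fin (n - 1)) ℝ :=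
  fun i j =>
    if n ≤ (i.val + 1) + (j.val + 1) then
      (Nat.choose i.val (n - (j.val + 1) - 1) : ℝ) * ((m : ℝ) - 1) ^ (n - (j.val + 1))
    else 0

/-- Vertices of the zero-divisor graph of `F^n`: nonzero zero-divisors. -/
abbrev zdVertex (F : Type) [Field F] [Fintype F] (n : ℕ) : Type :=
  {x : Fin n → F // x ≠ 0 ∧ ∃ y : Fin n → F, y ≠ 0 ∧ x * y = 0}

/-- The zero-divisor graph `Γ(R_n)` of `R_n = F × ⋯ × F` (`n` factors). -/
def zdGraph (F : Type) [Field F] [Fintype F] (n : ℕ) : SimpleGraph (zdVertex F n) where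
  Adj a b := a ≠ b ∧ (a : Fin n → F) * (b : Fin n → F) = 0
  symm := ⟨fun a b ⟨hne, h⟩ => ⟨hne.symm, by rwa [mul_comm]⟩⟩
  loopless := ⟨fun a ⟨hne, _⟩ => hne rfl⟩

/-- The set of main eigenvalues of a finite simple graph: real numbers `μ` admitting an
eigenvector of the adjacency matrix with eigenvalue `μ` and nonzero coordinate sum. -/
noncomputable def mainEigs {V : Type} [Fintype V] (G : SimpleGraph V) : Set ℝ :=
  {μ : ℝ | ∃ v : V → ℝ, v ≠ 0 ∧ (G.adjMatrix ℝ) *ᵥ v = μ • v ∧ ∑ i, v i ≠ 0}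

/-- `X_{*0}`: vertices whose `(n-1)`-st coordinate is nonzero and `n`-th coordinate is zero. -/
def Xstar0 (F : Type) [Field F] [Fintype F] (n : ℕ) (hn : 2 ≤ n) : Set (zdVertex F n) :=
  {x | (x : Fin n → F) ⟨n - 2, by omega⟩ ≠ 0 ∧ (x : Fin n → F) ⟨n - 1, by omega⟩ = 0}

/-- `X_{0*}`: vertices whose `(n-1)`-st coordinate is zero and `n`-th coordinate is nonzero. -/
def X0star (F : Type) [Field F] [Fintype F] (n : ℕ) (hn : 2 ≤ n) : Set (zdVertex F n) :=
  {x | (x : Fin n → F) ⟨n - 2, by omega⟩ = 0 ∧ (x : Fin n → F) ⟨n - 1, by omega⟩ ≠ 0}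

def subVerts (F : Type) [Field F] [Fintype F] (n : ℕ) (hn : 2 ≤ n) : Set (zdVertex F n) :=
  Xstar0 F n hn ∪ X0star F n hn

/-- The bipartite subgraph `Γ'(R_n)` of `Γ(R_n)` induced by `X_{*0} ∪ X_{0*}`. -/
def zdSubGraph (F : Type) [Field F] [Fintype F] (n : ℕ) (hn : 2 ≤ n) :
    SimpleGraph ↥(subVerts F n hn) :=
  SimpleGraph.induce (subVerts F n hn) (zdGraph F n)

/-- The coefficient sequence `h`: `h 0 = 1`,
`h j = F_{m,j+1}^n − Σ_{r=0}^{j−1} h r · F_{m,j−r}^n` for `j ≥ 1`. -/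
noncomputable def hseq (m n : ℕ) : ℕ → ℝ
  | 0 => 1
  | j + 1 => (genFib m (j + 2)) ^ n -
      ∑ r ∈ (Finset.range (j + 1)).attach, hseq m n r.1 * (genFib m (j + 1 - r.1)) ^ n
  decreasing_by exact Finset.mem_range.mp r.2
/-- D'Ocagne-type identity for generalized Fibonacci numbers. -/
theorem genFib_docagne (α : ℝ) (l r : ℕ) (hrl : r < l) :
    genFib α l * genFib α (r + 1) - genFib α (l + 1) * genFib α r
      = (1 - α) ^ (r + 1) * genFib α (l - r - 1) := by
  induction r generalizing l with
  | zero =>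
      obtain ⟨k, rfl⟩ : ∃ k, l = k + 1 := ⟨l - 1, by omega⟩
      simp [genFib]
      ring
  | succ r ih =>
      obtain ⟨k, rfl⟩ : ∃ k, l = k + 1 := ⟨l - 1, by omega⟩
      have hk : r < k := by omega
      have h := ih k hk
      have e1 : genFib α (r + 2) = genFib α (r + 1) + (α - 1) * genFib α r := rfl
      have e2 : genFib α (k + 2) = genFib α (k + 1) + (α - 1) * genFib α k := rfl
      have hl : k + 1 - (r + 1) - 1 = k - r - 1 := by omega
      rw [show r + 1 + 1 = r + 2 from rfl, e1, show k + 1 + 1 = k + 2 from rfl, e2, hl]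
      have : genFib α (k+1) * (genFib α (r+1) + (α-1) * genFib α r)
          - (genFib α (k+1) + (α-1) * genFib α k) * genFib α (r+1)
          = (1 - α) * (genFib α k * genFib α (r+1) - genFib α (k+1) * genFib α r) := by ring
      rw [this, h]
      ring
end

section
/- For every integer m ≥ 2 and all integers 0 ≤ r < l, the consecutive ratios of generalized Fibonacci numbers are distinct: F_{m,l+1}/F_{m,l} ≠ F_{m,r+1}/F_{m,r}; equivalently, F_{m,l}·F_{m,r+1} − F_{m,l+1}·F_{m,r} ≠ 0. -/
attribute [local instance] Classical.propDecidable

open Matrix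

noncomputable def gFib (m : ℕ) : ℕ → ℝ
  | 0 => 0
  | 1 => 1
  | k + 2 => gFib m (k + 1) + ((m : ℝ) - 1) * gFib m k

lemma gFib_pos (m : ℕ) (hm : 2 ≤ m) : ∀ k, 0 < gFib m (k + 1) ∧ 0 ≤ gFib m k := by
  have hm1 : (1 : ℝ) ≤ (m : ℝ) - 1 := by
    have : (2 : ℝ) ≤ (m : ℝ) := by exact_mod_cast hm
    linarith
  intro k
  induction k with
  | zero => simp [gFib]
  | succ k ih =>
    refine ⟨?_, ih.1.le⟩
    show 0 < gFib m (k + 2)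
    rw [gFib]
    nlinarith [ih.1, ih.2]

lemma genFib_pos (m : ℕ) (hm : 2 ≤ m) : ∀ k, 0 < genFib m k := by
  have hm1 : (1 : ℝ) ≤ (m : ℝ) - 1 := by
    have : (2 : ℝ) ≤ (m : ℝ) := by exact_mod_cast hm
    linarith
  have H : ∀ k, 0 < genFib m k ∧ 0 < genFib m (k + 1) := by
    intro k
    induction k with
    | zero => simp [genFib]
    | succ k ih =>
      refine ⟨ih.2, ?_⟩
      show 0 < genFib m (k + 2)
      rw [genFib]
      nlinarith [ih.1, ih.2]
  exact fun k => (H k).1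

lemma genFib_cassini (m : ℕ) : ∀ r : ℕ,
    genFib m (r + 1) * genFib m (r + 1) - genFib m (r + 2) * genFib m r =
      (-1) ^ (r + 1) * ((m : ℝ) - 1) ^ (r + 1) := by
  intro r
  induction r with
  | zero => simp only [genFib]; ring
  | succ r ih =>
    have h1 : genFib m (r + 2) = genFib m (r + 1) + ((m : ℝ) - 1) * genFib m r := rfl
    have h2 : genFib m (r + 3) = genFib m (r + 2) + ((m : ℝ) - 1) * genFib m (r + 1) := rfl
    have : genFib m (r + 2) * genFib m (r + 2) - genFib m (r + 3) * genFib m (r + 1) =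
        -(((m : ℝ) - 1)) * (genFib m (r + 1) * genFib m (r + 1) - genFib m (r + 2) * genFib m r) := by
      rw [h2]
      linear_combination genFib m (r + 2) * h1
    rw [this, ih]
    ring

lemma genFib_key (m : ℕ) (r : ℕ) : ∀ k : ℕ,
    genFib m (r + k) * genFib m (r + 1) - genFib m (r + k + 1) * genFib m r =
      (-1) ^ (r + 1) * ((m : ℝ) - 1) ^ (r + 1) * gFib m k := by
  have H : ∀ k : ℕ,
      (genFib m (r + k) * genFib m (r + 1) - genFib m (r + k + 1) * genFib m r =
        (-1) ^ (r + 1) * ((m : ℝ) - 1) ^ (r + 1) * gFib m k) ∧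
      (genFib m (r + k + 1) * genFib m (r + 1) - genFib m (r + k + 2) * genFib m r =
        (-1) ^ (r + 1) * ((m : ℝ) - 1) ^ (r + 1) * gFib m (k + 1)) := by
    intro k
    induction k with
    | zero =>
      constructor
      · simp [gFib]; ring
      · simpa [gFib] using genFib_cassini m r
    | succ k ih =>
      refine ⟨ih.2, ?_⟩
      have h1 : genFib m (r + k + 3) = genFib m (r + k + 2) + ((m : ℝ) - 1) * genFib m (r + k + 1) := rfl
      have h2 : genFib m (r + k + 2) = genFib m (r + k + 1) + ((m : ℝ) - 1) * genFib m (r + k) := rfl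
      have h3 : gFib m (k + 2) = gFib m (k + 1) + ((m : ℝ) - 1) * gFib m k := rfl
      have e1 := ih.1
      have e2 := ih.2
      have : r + (k + 1) + 1 = r + k + 2 := by ring
      rw [this]
      have : r + (k + 1) + 2 = r + k + 3 := by ring
      rw [this]
      rw [h1, h3]
      linear_combination e2 + ((m : ℝ) - 1) * e1 + genFib m (r + 1) * h2
  exact fun k => (H k).1

/-- For `m ≥ 2` and `0 ≤ r < l`, consecutive ratios of generalized Fibonacci numbers
are distinct; equivalently `F_{m,l}·F_{m,r+1} − F_{m,l+1}·F_{m,r} ≠ 0`. -/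
theorem genFib_ratios_distinct (m : ℕ) (hm : 2 ≤ m) (r l : ℕ) (hrl : r < l) :
    genFib m (l + 1) / genFib m l ≠ genFib m (r + 1) / genFib m r ∧
    genFib m l * genFib m (r + 1) - genFib m (l + 1) * genFib m r ≠ 0 := by
  have hFl := genFib_pos m hm l
  have hFr := genFib_pos m hm r
  have hm1 : (1 : ℝ) ≤ (m : ℝ) - 1 := by
    have : (2 : ℝ) ≤ (m : ℝ) := by exact_mod_cast hm
    linarith
  obtain ⟨k, hk⟩ : ∃ k, l = r + k ∧ 1 ≤ k := ⟨l - r, by omega, by omega⟩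
  have key := genFib_key m r k
  rw [← hk.1] at key
  have hg : 0 < gFib m k := by
    obtain ⟨k', rfl⟩ : ∃ k', k = k' + 1 := ⟨k - 1, by omega⟩
    exact (gFib_pos m hm k').1
  have hne : genFib m l * genFib m (r + 1) - genFib m (l + 1) * genFib m r ≠ 0 := by
    rw [key]
    have h1 : ((-1 : ℝ)) ^ (r + 1) ≠ 0 := by positivity
    have h2 : ((m : ℝ) - 1) ^ (r + 1) ≠ 0 := by positivity
    positivity
  refine ⟨?_, hne⟩
  intro h
  rw [div_eq_div_iff hFl.ne' hFr.ne'] at h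
  apply hne
  rw [sub_eq_zero]
  linarith [h]
end

section
/- Let m ≥ 2 and n ≥ 2 be integers, and set γ_ℓ = F_{m,ℓ+1}/F_{m,ℓ}. Let h : ℕ → ℝ be the sequence with h_0 = 1 and h_j = F_{m,j+1}^n − Σ_{r=0}^{j−1} h_r·F_{m,j−r}^n for j ≥ 1. Then for every i ∈ {1, …, n−1} and every k ∈ {1, …, n−2}, the i-th entry of the vector P[m,n]^k·e satisfies (P[m,n]^k e)_i = F_{m,k}^n·γ_k^i − Σ_{j=0}^{k−1} h_j·F_{m,k−j−1}^n·γ_{k−j−1}^i, where e is the all-ones vector. -/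
attribute [local instance] Classical.propDecidable

open Matrix

lemma genFib_two (α : ℝ) (k : ℕ) :
    genFib α (k + 2) = genFib α (k + 1) + (α - 1) * genFib α k := rfl

lemma one_le_genFib {α : ℝ} (hα : 2 ≤ α) : ∀ k, 1 ≤ genFib α k := by
  have key : ∀ k, 1 ≤ genFib α k ∧ 1 ≤ genFib α (k + 1) := by
    intro k
    induction k with
    | zero => constructor <;> simp [genFib]
    | succ p ih =>
      refine ⟨ih.2, ?_⟩
      rw [genFib_two]
      nlinarith [ih.1, ih.2]
  exact fun k => (key k).1

lemma genFib_ne_zero {α : ℝ} (hα : 2 ≤ α) (k : ℕ) : genFib α k ≠ 0 := by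
  have := one_le_genFib hα k; linarith

noncomputable def Gvec (m n : ℕ) (ℓ : ℕ) : Fin (n - 1) → ℝ :=
  fun i => (genFib m (ℓ + 1) / genFib m ℓ) ^ (i.val + 1)

lemma key_mulVec (m n : ℕ) (hm : 2 ≤ m) (hn : 2 ≤ n) (ℓ : ℕ) :
    Pmat m n *ᵥ Gvec m n ℓ
      = ((genFib m (ℓ + 1) / genFib m ℓ) ^ n) • (Gvec m n (ℓ + 1) - fun _ => (1 : ℝ)) := by
  have hm' : (2 : ℝ) ≤ (m : ℝ) := by exact_mod_cast hm
  have hF := genFib_ne_zero hm'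
  set γ : ℝ := genFib m (ℓ + 1) / genFib m ℓ with hγ
  set γ' : ℝ := genFib m (ℓ + 2) / genFib m (ℓ + 1) with hγ'
  funext i
  have hi : i.val < n - 1 := i.isLt
  -- step 1: expand
  have e1 : (Pmat m n *ᵥ Gvec m n ℓ) i
      = ∑ t ∈ Finset.range (n - 1),
          (if n ≤ (i.val + 1) + (t + 1) then
            (Nat.choose (i.val + 1) (n - (t + 1)) : ℝ) * ((m : ℝ) - 1) ^ (n - (t + 1))
          else 0) * γ ^ (t + 1) := by
    rw [mulVec, ← Fin.sum_univ_eq_sum_range]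
    rfl
  rw [e1]
  rw [← Finset.sum_range_reflect]
  have e2 : ∀ s ∈ Finset.range (n - 1),
      (if n ≤ (i.val + 1) + ((n - 1 - 1 - s) + 1) then
        (Nat.choose (i.val + 1) (n - ((n - 1 - 1 - s) + 1)) : ℝ) * ((m : ℝ) - 1) ^ (n - ((n - 1 - 1 - s) + 1))
      else 0) * γ ^ ((n - 1 - 1 - s) + 1)
      = (if s ≤ i.val then
          (Nat.choose (i.val + 1) (s + 1) : ℝ) * ((m : ℝ) - 1) ^ (s + 1)
        else 0) * γ ^ (n - 1 - s) := by
    intro s hs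
    rw [Finset.mem_range] at hs
    have h1 : (n - 1 - 1 - s) + 1 = n - 1 - s := by omega
    have h2 : n - (n - 1 - s) = s + 1 := by omega
    have h3 : (n ≤ (i.val + 1) + (n - 1 - s)) = (s ≤ i.val) := by
      rw [eq_iff_iff]; omega
    rw [h1, h2]; simp only [h3]
  rw [Finset.sum_congr rfl e2]
  -- restrict sum to range (i.val + 1)
  have e3 : ∑ s ∈ Finset.range (n - 1),
      (if s ≤ i.val then (Nat.choose (i.val + 1) (s + 1) : ℝ) * ((m : ℝ) - 1) ^ (s + 1) else 0)
        * γ ^ (n - 1 - s)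
      = ∑ s ∈ Finset.range (i.val + 1),
          ((Nat.choose (i.val + 1) (s + 1) : ℝ) * ((m : ℝ) - 1) ^ (s + 1)) * γ ^ (n - 1 - s) := by
    rw [← Finset.sum_subset (Finset.range_subset_range.mpr (by omega : i.val + 1 ≤ n - 1))]
    · apply Finset.sum_congr rfl
      intro s hs
      rw [Finset.mem_range] at hs
      rw [if_pos (by omega)]
    · intro s _ hs
      rw [Finset.mem_range, not_lt] at hs
      rw [if_neg (by omega), zero_mul]
  rw [e3]
  -- factor γ^(n-1-i)
  have e4 : ∀ s ∈ Finset.range (i.val + 1),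
      ((Nat.choose (i.val + 1) (s + 1) : ℝ) * ((m : ℝ) - 1) ^ (s + 1)) * γ ^ (n - 1 - s)
      = γ ^ (n - 1 - i.val) * (((m : ℝ) - 1) ^ (s + 1) * γ ^ (i.val - s)
          * (Nat.choose (i.val + 1) (s + 1) : ℝ)) := by
    intro s hs
    rw [Finset.mem_range] at hs
    have : γ ^ (n - 1 - s) = γ ^ (n - 1 - i.val) * γ ^ (i.val - s) := by
      rw [← pow_add]; congr 1; omega
    rw [this]; ring
  rw [Finset.sum_congr rfl e4, ← Finset.mul_sum]
  -- binomial theorem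
  have bin : ∑ s ∈ Finset.range (i.val + 1),
      ((m : ℝ) - 1) ^ (s + 1) * γ ^ (i.val - s) * (Nat.choose (i.val + 1) (s + 1) : ℝ)
      = (((m : ℝ) - 1) + γ) ^ (i.val + 1) - γ ^ (i.val + 1) := by
    have := add_pow ((m : ℝ) - 1) γ (i.val + 1)
    rw [Finset.sum_range_succ'] at this
    simp only [pow_zero, one_mul, Nat.choose_zero_right, Nat.cast_one, mul_one, Nat.sub_zero] at this
    have e : ∀ s, (i.val + 1) - (s + 1) = i.val - s := fun s => by omega
    simp only [e] at this
    linarith [this]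
  rw [bin]
  have hcomb : ((m : ℝ) - 1) + γ = γ' * γ := by
    rw [hγ, hγ', genFib_two]
    field_simp [hF ℓ, hF (ℓ + 1)]
    ring
  rw [hcomb]
  have hpow : γ ^ (n - 1 - i.val) * ((γ' * γ) ^ (i.val + 1) - γ ^ (i.val + 1))
      = γ ^ n * γ' ^ (i.val + 1) - γ ^ n := by
    have : γ ^ (n - 1 - i.val) * γ ^ (i.val + 1) = γ ^ n := by
      rw [← pow_add]; congr 1; omega
    rw [mul_pow, mul_sub, ← mul_assoc, mul_comm (γ ^ (n - 1 - i.val)) (γ' ^ (i.val + 1)),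
      mul_assoc, this]
    ring
  rw [hpow]
  simp [Gvec, Pi.smul_apply, hγ']
  ring

lemma hseq_eq (m n : ℕ) (k : ℕ) :
    hseq m n k = genFib m (k + 1) ^ n
      - ∑ j ∈ Finset.range k, hseq m n j * genFib m (k - j) ^ n := by
  cases k with
  | zero => simp [hseq, genFib]
  | succ j =>
    rw [hseq, Finset.sum_attach (Finset.range (j + 1))
      (fun r => hseq m n r * genFib m (j + 1 - r) ^ n)]

lemma mulVec_finset_sum {r : ℕ} (A : Matrix (Fin r) (Fin r) ℝ) {ι : Type} (s : Finset ι)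
    (f : ι → (Fin r → ℝ)) : A *ᵥ (∑ j ∈ s, f j) = ∑ j ∈ s, A *ᵥ f j := by
  simp only [← Matrix.mulVecLin_apply]
  exact map_sum _ _ _

lemma Pmat_pow_one (m n : ℕ) (hm : 2 ≤ m) (hn : 2 ≤ n) (k : ℕ) :
    (Pmat m n ^ k) *ᵥ (fun _ => (1 : ℝ))
      = (genFib m k ^ n) • Gvec m n k
        - ∑ j ∈ Finset.range k,
            (hseq m n j * genFib m (k - j - 1) ^ n) • Gvec m n (k - j - 1) := by
  have hm' : (2 : ℝ) ≤ (m : ℝ) := by exact_mod_cast hm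
  have hF := genFib_ne_zero hm'
  induction k with
  | zero =>
    funext i
    simp [Gvec, genFib, Matrix.one_mulVec]
  | succ k ih =>
    rw [pow_succ', ← Matrix.mulVec_mulVec, ih, Matrix.mulVec_sub, Matrix.mulVec_smul,
      mulVec_finset_sum]
    simp only [Matrix.mulVec_smul, key_mulVec m n hm hn]
    funext i
    simp only [Pi.sub_apply, Pi.smul_apply, Finset.sum_apply, smul_eq_mul]
    have eL : ∀ j ∈ Finset.range k,
        hseq m n j * genFib m (k - j - 1) ^ n *
          ((genFib m (k - j - 1 + 1) / genFib m (k - j - 1)) ^ n *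
            (Gvec m n (k - j - 1 + 1) i - 1))
        = hseq m n j * genFib m (k - j) ^ n * Gvec m n (k - j) i
            - hseq m n j * genFib m (k - j) ^ n := by
      intro j hj
      rw [Finset.mem_range] at hj
      have h1 : k - j - 1 + 1 = k - j := by omega
      rw [h1]
      have h2 : genFib m (k - j - 1) ^ n * (genFib m (k - j) / genFib m (k - j - 1)) ^ n
          = genFib m (k - j) ^ n := by
        rw [← mul_pow]; congr 1; rw [mul_comm, div_mul_cancel₀ _ (hF _)]
      linear_combination (hseq m n j * (Gvec m n (k - j) i - 1)) * h2
    rw [Finset.sum_congr rfl eL, Finset.sum_sub_distrib, Finset.sum_range_succ]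
    have eR : ∀ j ∈ Finset.range k,
        hseq m n j * genFib m (k + 1 - j - 1) ^ n * Gvec m n (k + 1 - j - 1) i
        = hseq m n j * genFib m (k - j) ^ n * Gvec m n (k - j) i := by
      intro j hj
      rw [Finset.mem_range] at hj
      have h1 : k + 1 - j - 1 = k - j := by omega
      rw [h1]
    rw [Finset.sum_congr rfl eR]
    have hterm : hseq m n k * genFib m (k + 1 - k - 1) ^ n * Gvec m n (k + 1 - k - 1) i
        = hseq m n k := by
      have h0 : k + 1 - k - 1 = 0 := by omega
      rw [h0]
      simp [Gvec, genFib]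
    rw [hterm]
    have hA : genFib m k ^ n * (genFib m (k + 1) / genFib m k) ^ n
        = genFib m (k + 1) ^ n := by
      rw [← mul_pow]; congr 1; rw [mul_comm, div_mul_cancel₀ _ (hF _)]
    have hhk := hseq_eq m n k
    linear_combination (Gvec m n (k + 1) i - 1) * hA + hhk


/-- Entries of the walk matrix of `P[m,n]`: for `1 ≤ k ≤ n−2` and `i ∈ {1,…,n−1}`,
`(P[m,n]^k e)_i = F_{m,k}^n γ_k^i − Σ_{j=0}^{k−1} h_j F_{m,k−j−1}^n γ_{k−j−1}^i`,
where `γ_ℓ = F_{m,ℓ+1}/F_{m,ℓ}`. -/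
theorem Pmat_pow_mulVec_one (m n : ℕ) (hm : 2 ≤ m) (hn : 2 ≤ n) (i : Fin (n - 1))
    (k : ℕ) (hk1 : 1 ≤ k) (hk2 : k ≤ n - 2) :
    ((Pmat m n ^ k) *ᵥ fun _ => (1 : ℝ)) i
      = (genFib m k) ^ n * (genFib m (k + 1) / genFib m k) ^ (i.val + 1)
        - ∑ j ∈ Finset.range k, hseq m n j * (genFib m (k - j - 1)) ^ n *
            (genFib m (k - j) / genFib m (k - j - 1)) ^ (i.val + 1) := by
  rw [Pmat_pow_one m n hm hn k]
  simp only [Pi.sub_apply, Pi.smul_apply, Finset.sum_apply, smul_eq_mul, Gvec]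
  congr 1
  apply Finset.sum_congr rfl
  intro j hj
  rw [Finset.mem_range] at hj
  have h1 : k - j - 1 + 1 = k - j := by omega
  rw [h1, mul_assoc]
end

section
/- Let F be a finite field with m elements and let n ≥ 2 be an integer. The zero-divisor graph Γ(R_n) of the ring R_n = F × ⋯ × F (n factors) has exactly n−1 distinct main eigenvalues; that is, the set of real numbers λ for which the adjacency matrix of Γ(R_n) admits an eigenvector with eigenvalue λ whose coordinate sum is nonzero has cardinality n−1. -/
attribute [local instance] Classical.propDecidable

open Matrix

namespace ZD

/-- ratio sequence of the generalized Fibonacci numbers -/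
noncomputable def bseq (w : ℝ) : ℕ → ℝ
  | 0 => 1
  | k + 1 => 1 + w / bseq w k

lemma bseq_succ (w : ℝ) (k : ℕ) : bseq w (k+1) = 1 + w / bseq w k := rfl

lemma bseq_pos (w : ℝ) (hw : 0 < w) : ∀ k, 0 < bseq w k
  | 0 => one_pos
  | k + 1 => by
      have h := bseq_pos w hw k
      rw [bseq_succ]; positivity

variable {w : ℝ} (hw : 0 < w)

include hw

lemma bstep_anti {x y : ℝ} (hx : 0 < x) (hxy : x < y) : 1 + w / y < 1 + w / x := by
  have hy : 0 < y := hx.trans hxy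
  have : w / y < w / x := div_lt_div_of_pos_left hw hx hxy
  linarith

lemma bseq_triple : ∀ k, bseq w (2*k) < bseq w (2*k+2) ∧ bseq w (2*k+2) < bseq w (2*k+1)
  | 0 => by
      constructor
      · show (1:ℝ) < 1 + w / bseq w 1
        have h1 : (0:ℝ) < bseq w 1 := bseq_pos w hw 1
        have : 0 < w / bseq w 1 := div_pos hw h1
        linarith
      · show bseq w 2 < bseq w 1
        rw [show (2:ℕ) = 1 + 1 from rfl, bseq_succ, bseq_succ w 0]
        have h0 : bseq w 0 = 1 := rfl
        rw [h0]
        apply bstep_anti hw one_pos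
        have : 0 < w / 1 := by simpa using hw
        linarith [bseq_succ w 0]
  | (k+1) => by
      obtain ⟨h1, h2⟩ := bseq_triple k
      have p0 := bseq_pos w hw (2*k)
      have p1 := bseq_pos w hw (2*k+1)
      have p2 := bseq_pos w hw (2*k+2)
      -- b_{2k+2} < b_{2k+3}
      have h3 : bseq w (2*k+2) < bseq w (2*k+3) := by
        have : 1 + w / bseq w (2*k+2) > 1 + w / bseq w (2*k+1) := bstep_anti hw p2 h2
        calc bseq w (2*k+2) = 1 + w / bseq w (2*k+1) := bseq_succ w (2*k+1)
        _ < 1 + w / bseq w (2*k+2) := this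
        _ = bseq w (2*k+3) := (bseq_succ w (2*k+2)).symm
      have p3 := bseq_pos w hw (2*k+3)
      constructor
      · -- b_{2k+2} < b_{2k+4}
        have : 1 + w / bseq w (2*k+3) < 1 + w / bseq w (2*k+2) := bstep_anti hw p2 h3
        have h4 : bseq w (2*k+4) < bseq w (2*k+3) := by
          calc bseq w (2*k+4) = 1 + w / bseq w (2*k+3) := bseq_succ w (2*k+3)
          _ < 1 + w / bseq w (2*k+2) := this
          _ = bseq w (2*k+3) := (bseq_succ w (2*k+2)).symm
        have h6 : bseq w (2*k+3) < bseq w (2*k+1) := by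
          have := bstep_anti hw p0 h1
          calc bseq w (2*k+3) = 1 + w / bseq w (2*k+2) := bseq_succ w (2*k+2)
          _ < 1 + w / bseq w (2*k) := this
          _ = bseq w (2*k+1) := (bseq_succ w (2*k)).symm
        have h7 : 1 + w / bseq w (2*k+1) < 1 + w / bseq w (2*k+3) := bstep_anti hw p3 h6
        have goal' : bseq w (2*k+2) < bseq w (2*k+4) := by
          rw [show 2*k+2 = (2*k+1)+1 from rfl, show 2*k+4 = (2*k+3)+1 from rfl,
            bseq_succ w (2*k+1), bseq_succ w (2*k+3)]
          exact h7
        show bseq w (2*(k+1)) < bseq w (2*(k+1)+2)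
        have e2 : 2*(k+1)+2 = 2*k+4 := by omega
        have e1 : 2*(k+1) = 2*k+2 := by omega
        rw [e2, e1]
        exact goal'
      · show bseq w (2*(k+1)+2) < bseq w (2*(k+1)+1)
        have e1 : 2*(k+1)+2 = 2*k+4 := by ring
        have e2 : 2*(k+1)+1 = 2*k+3 := by ring
        rw [e1, e2]
        have : 1 + w / bseq w (2*k+3) < 1 + w / bseq w (2*k+2) := bstep_anti hw p2 h3
        calc bseq w (2*k+4) = 1 + w / bseq w (2*k+3) := bseq_succ w (2*k+3)
        _ < 1 + w / bseq w (2*k+2) := this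
        _ = bseq w (2*k+3) := (bseq_succ w (2*k+2)).symm

lemma bseq_even_strictMono : StrictMono (fun k => bseq w (2*k)) :=
  strictMono_nat_of_lt_succ fun k => by
    have := (bseq_triple hw k).1
    simpa [Nat.mul_succ] using this

lemma bseq_odd_strictAnti : StrictAnti (fun k => bseq w (2*k+1)) :=
  strictAnti_nat_of_succ_lt fun k => by
    obtain ⟨h1, _⟩ := bseq_triple hw k
    have p0 := bseq_pos w hw (2*k)
    have : 1 + w / bseq w (2*k+2) < 1 + w / bseq w (2*k) := bstep_anti hw p0 h1
    have h6 : bseq w (2*k+3) < bseq w (2*k+1) := by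
      calc bseq w (2*k+3) = 1 + w / bseq w (2*k+2) := bseq_succ w (2*k+2)
      _ < 1 + w / bseq w (2*k) := this
      _ = bseq w (2*k+1) := (bseq_succ w (2*k)).symm
    simpa [Nat.mul_succ] using h6

lemma bseq_even_lt_odd (i j : ℕ) : bseq w (2*i) < bseq w (2*j+1) := by
  rcases le_or_gt i j with h | h
  · have h1 : bseq w (2*i) ≤ bseq w (2*j) := (bseq_even_strictMono hw).monotone h
    have h2 : bseq w (2*j) < bseq w (2*j+1) :=
      lt_trans (bseq_triple hw j).1 ((bseq_triple hw j).2)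
    linarith
  · have h1 : bseq w (2*i) < bseq w (2*i+1) :=
      lt_trans (bseq_triple hw i).1 ((bseq_triple hw i).2)
    have h2 : bseq w (2*i+1) ≤ bseq w (2*j+1) := (bseq_odd_strictAnti hw).antitone (by omega)
    linarith

lemma bseq_injective : Function.Injective (bseq w) := by
  intro a b hab
  by_contra hne
  wlog hlt : a < b generalizing a b
  · exact this hab.symm (Ne.symm hne) (by omega)
  obtain ⟨i, hi⟩ | ⟨i, hi⟩ := Nat.even_or_odd a <;>
    obtain ⟨j, hj⟩ | ⟨j, hj⟩ := Nat.even_or_odd b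
  · rw [show a = 2*i by omega, show b = 2*j by omega] at hab hlt
    exact absurd hab (ne_of_lt ((bseq_even_strictMono hw) (by omega : i < j)))
  · rw [show a = 2*i by omega, hj] at hab
    exact absurd hab (ne_of_lt (bseq_even_lt_odd hw i j))
  · rw [hi, show b = 2*j by omega] at hab
    exact absurd hab.symm (ne_of_lt (bseq_even_lt_odd hw j i))
  · rw [hi, hj] at hab
    rw [hi, hj] at hlt
    exact absurd hab.symm (ne_of_lt ((bseq_odd_strictAnti hw) (by omega : i < j)))

omit hw

/-- geometric vector `i ↦ b^(i+1)` on indices `1..n-1` -/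
noncomputable def vecE (n : ℕ) (b : ℝ) : Fin (n-1) → ℝ := fun i => b ^ (i.val + 1)

lemma vecE_one (n : ℕ) : vecE n 1 = fun _ => (1:ℝ) := by
  funext i; simp [vecE]

lemma Pmat_apply (m n : ℕ) (i j : Fin (n-1)) :
    Pmat m n i j =
      (Nat.choose (i.val+1) (n - (j.val+1)) : ℝ) * ((m:ℝ)-1) ^ (n - (j.val+1)) := by
  unfold Pmat
  split
  · rfl
  · rw [Nat.choose_eq_zero_of_lt (by omega)]
    simp

lemma Pmat_mulVec_vecE (m n : ℕ) (hn : 2 ≤ n) {b : ℝ} (hb : 0 < b) :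
    Pmat m n *ᵥ vecE n b =
      b^n • vecE n (1 + ((m:ℝ)-1)/b) - b^n • vecE n 1 := by
  set w : ℝ := (m:ℝ) - 1 with hwdef
  funext i
  have hb' : b ≠ 0 := ne_of_gt hb
  have hi1 : i.val + 1 ≤ n - 1 := i.isLt
  -- LHS as a range sum
  have lhs1 : (Pmat m n *ᵥ vecE n b) i
      = ∑ j ∈ Finset.range (n-1), (Nat.choose (i.val+1) (n - (j+1)) : ℝ) * w ^ (n-(j+1)) * b ^ (j+1) := by
    rw [mulVec, dotProduct]
    simp only [Pmat_apply, vecE]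
    exact Fin.sum_univ_eq_sum_range
      (fun j => ((i.val+1).choose (n-(j+1)) : ℝ) * w^(n-(j+1)) * b^(j+1)) (n-1)
  -- reflect the sum
  have lhs2 : (Pmat m n *ᵥ vecE n b) i
      = ∑ j ∈ Finset.range (n-1), (Nat.choose (i.val+1) (j+1) : ℝ) * w ^ (j+1) * b ^ (n-1-j) := by
    rw [lhs1, ← Finset.sum_range_reflect]
    apply Finset.sum_congr rfl
    intro j hj
    have hj' : j < n - 1 := Finset.mem_range.mp hj
    have e1 : n - (n - 1 - 1 - j + 1) = j + 1 := by omega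
    have e2 : n - 1 - 1 - j + 1 = n - 1 - j := by omega
    rw [e1, e2]
  -- shift index
  have lhs3 : (Pmat m n *ᵥ vecE n b) i
      = (∑ s ∈ Finset.range n, (Nat.choose (i.val+1) s : ℝ) * w ^ s * b ^ (n-s)) - b ^ n := by
    rw [lhs2]
    have hsplit := Finset.sum_range_succ' (fun s => (Nat.choose (i.val+1) s : ℝ) * w ^ s * b ^ (n-s)) (n-1)
    rw [show n - 1 + 1 = n by omega] at hsplit
    rw [hsplit]
    simp only [Nat.choose_zero_right, Nat.cast_one, pow_zero, one_mul, Nat.sub_zero, mul_one]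
    rw [add_sub_cancel_right]
    apply Finset.sum_congr rfl
    intro j hj
    have hj' : j < n - 1 := Finset.mem_range.mp hj
    rw [show n - (j+1) = n - 1 - j by omega]
  -- evaluate the binomial sum
  have key : ∑ s ∈ Finset.range n, (Nat.choose (i.val+1) s : ℝ) * w ^ s * b ^ (n-s)
      = b ^ (n - (i.val+1)) * (w + b) ^ (i.val + 1) := by
    have hsub : Finset.range (i.val+2) ⊆ Finset.range n := by
      intro t ht; simp only [Finset.mem_range] at *; omega
    rw [← Finset.sum_subset hsub (by
      intro s _ hs
      simp only [Finset.mem_range, not_lt] at hs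
      rw [Nat.choose_eq_zero_of_lt (by omega)]
      simp)]
    have expand : ∀ s ∈ Finset.range (i.val+2),
        (Nat.choose (i.val+1) s : ℝ) * w ^ s * b ^ (n-s)
          = b ^ (n - (i.val+1)) * (w ^ s * b ^ (i.val+1-s) * (Nat.choose (i.val+1) s : ℝ)) := by
      intro s hs
      have hs' : s < i.val + 2 := Finset.mem_range.mp hs
      have : b ^ (n - s) = b ^ (n - (i.val+1)) * b ^ (i.val+1-s) := by
        rw [← pow_add]
        congr 1
        omega
      rw [this]; ring
    rw [Finset.sum_congr rfl expand, ← Finset.mul_sum]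
    congr 1
    exact (add_pow w b (i.val+1)).symm
  -- RHS
  have rhs : (b^n • vecE n (1 + w/b) - b^n • vecE n 1) i
      = b ^ (n - (i.val+1)) * (w + b) ^ (i.val + 1) - b ^ n := by
    simp only [Pi.sub_apply, Pi.smul_apply, vecE, smul_eq_mul, one_pow, mul_one]
    congr 1
    have h1 : (1 + w/b) = (b + w)/b := by field_simp
    rw [h1, div_pow]
    rw [show b ^ n = b ^ (n - (i.val+1)) * b ^ (i.val+1) by rw [← pow_add]; congr 1; omega]
    have hbp : b ^ (i.val+1) ≠ 0 := pow_ne_zero _ hb'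
    field_simp
    ring
  rw [lhs3, key, rhs]

end ZD

namespace ZD

noncomputable def Uspan (m n : ℕ) : Submodule ℝ (Fin (n-1) → ℝ) :=
  Submodule.span ℝ (Set.range fun k : ℕ => (Pmat m n)^k *ᵥ (fun _ => 1))

lemma pow_mulVec_one_mem (m n : ℕ) (k : ℕ) :
    (Pmat m n)^k *ᵥ (fun _ => 1) ∈ Uspan m n :=
  Submodule.subset_span ⟨k, rfl⟩

lemma Uspan_invariant (m n : ℕ) {v : Fin (n-1) → ℝ} (hv : v ∈ Uspan m n) :
    Pmat m n *ᵥ v ∈ Uspan m n := by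
  induction hv using Submodule.span_induction with
  | mem x hx =>
      obtain ⟨k, rfl⟩ := hx
      show Pmat m n *ᵥ ((Pmat m n)^k *ᵥ fun _ => 1) ∈ _
      rw [Matrix.mulVec_mulVec, ← pow_succ']
      exact pow_mulVec_one_mem m n (k+1)
  | zero => rw [Matrix.mulVec_zero]; exact Submodule.zero_mem _
  | add x y _ _ hx hy => rw [Matrix.mulVec_add]; exact Submodule.add_mem _ hx hy
  | smul c x _ hx => rw [Matrix.mulVec_smul]; exact Submodule.smul_mem _ _ hx

lemma vecE_one_mem (m n : ℕ) : vecE n 1 ∈ Uspan m n := by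
  have : vecE n 1 = (Pmat m n)^0 *ᵥ (fun _ => 1) := by
    rw [vecE_one, pow_zero, Matrix.one_mulVec]
  rw [this]; exact pow_mulVec_one_mem m n 0

lemma vecE_bseq_mem (m n : ℕ) (hm : 2 ≤ m) (hn : 2 ≤ n) :
    ∀ r, vecE n (bseq ((m:ℝ)-1) r) ∈ Uspan m n := by
  have hm' : (2:ℝ) ≤ (m:ℝ) := by exact_mod_cast hm
  have hw : (0:ℝ) < (m:ℝ)-1 := by linarith
  intro r
  induction r with
  | zero => exact vecE_one_mem m n
  | succ r ih =>
      have hb := bseq_pos ((m:ℝ)-1) hw r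
      have hkey := Pmat_mulVec_vecE m n hn hb
      have hP : Pmat m n *ᵥ vecE n (bseq ((m:ℝ)-1) r) ∈ Uspan m n := Uspan_invariant m n ih
      have hc : (bseq ((m:ℝ)-1) r)^n ≠ 0 := pow_ne_zero _ (ne_of_gt hb)
      have heq : vecE n (bseq ((m:ℝ)-1) (r+1))
          = ((bseq ((m:ℝ)-1) r)^n)⁻¹ •
            (Pmat m n *ᵥ vecE n (bseq ((m:ℝ)-1) r) + (bseq ((m:ℝ)-1) r)^n • vecE n 1) := by
        rw [bseq_succ, hkey, sub_add_cancel, smul_smul, inv_mul_cancel₀ hc, one_smul]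
      rw [heq]
      exact Submodule.smul_mem _ _
        (Submodule.add_mem _ hP (Submodule.smul_mem _ _ (vecE_one_mem m n)))

lemma vecE_indep (m n : ℕ) (hm : 2 ≤ m) :
    LinearIndependent ℝ (fun r : Fin (n-1) => vecE n (bseq ((m:ℝ)-1) r.val)) := by
  have hm' : (2:ℝ) ≤ (m:ℝ) := by exact_mod_cast hm
  have hw : (0:ℝ) < (m:ℝ)-1 := by linarith
  set u : Fin (n-1) → ℝ := fun r => bseq ((m:ℝ)-1) r.val with hu
  have hM : (fun r : Fin (n-1) => vecE n (bseq ((m:ℝ)-1) r.val))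
      = fun r => (diagonal u * vandermonde u) r := by
    funext r i
    rw [Matrix.diagonal_mul, vandermonde]
    show (u r) ^ (i.val + 1) = u r * (u r) ^ i.val
    rw [pow_succ']
  rw [hM]
  apply Matrix.linearIndependent_rows_iff_isUnit.2
  rw [Matrix.isUnit_iff_isUnit_det, isUnit_iff_ne_zero, Matrix.det_mul,
    Matrix.det_diagonal]
  apply mul_ne_zero
  · exact Finset.prod_ne_zero_iff.2 fun r _ => ne_of_gt (bseq_pos _ hw r.val)
  · rw [Matrix.det_vandermonde_ne_zero_iff]
    exact (bseq_injective hw).comp Fin.val_injective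

lemma finrank_Uspan (m n : ℕ) (hm : 2 ≤ m) (hn : 2 ≤ n) :
    Module.finrank ℝ (Uspan m n) = n - 1 := by
  have hamb : Module.finrank ℝ (Fin (n-1) → ℝ) = n - 1 := by
    simp [Module.finrank_pi]
  apply le_antisymm
  · exact le_trans (Submodule.finrank_le _) (le_of_eq hamb)
  · have hle : Submodule.span ℝ
        (Set.range fun r : Fin (n-1) => vecE n (bseq ((m:ℝ)-1) r.val)) ≤ Uspan m n := by
      rw [Submodule.span_le]
      rintro x ⟨r, rfl⟩
      exact vecE_bseq_mem m n hm hn r.val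
    have := finrank_span_eq_card (vecE_indep m n hm)
    rw [Fintype.card_fin] at this
    calc n - 1 = Module.finrank ℝ (Submodule.span ℝ
          (Set.range fun r : Fin (n-1) => vecE n (bseq ((m:ℝ)-1) r.val))) := this.symm
    _ ≤ Module.finrank ℝ (Uspan m n) := Submodule.finrank_mono hle

end ZD


namespace ZD
variable (F : Type) [Field F] [Fintype F]
set_option linter.unusedSectionVars false

noncomputable def zcount (n : ℕ) (x : Fin n → F) : ℕ := (Finset.univ.filter fun i => x i = 0).card

noncomputable def suppF (n : ℕ) (x : Fin n → F) : Finset (Fin n) := Finset.univ.filter fun i => x i ≠ 0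

lemma zcount_add_supp (n : ℕ) (x : Fin n → F) : zcount F n x + (suppF F n x).card = n := by
  have h := Finset.card_filter_add_card_filter_not
    (s := (Finset.univ : Finset (Fin n))) (p := fun i => x i = 0)
  rw [Finset.card_univ, Fintype.card_fin] at h
  rw [zcount, suppF]
  convert h using 3

lemma exists_zero_of_vertex {n : ℕ} (x : zdVertex F n) : ∃ i, x.1 i = 0 := by
  obtain ⟨hx0, y, hy0, hxy⟩ := x.2
  obtain ⟨i, hi⟩ := Function.ne_iff.mp hy0
  simp only [Pi.zero_apply] at hi
  refine ⟨i, ?_⟩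
  have h := congr_fun hxy i
  simp only [Pi.mul_apply, Pi.zero_apply] at h
  rcases mul_eq_zero.mp h with h' | h'
  · exact h'
  · exact absurd h' hi

lemma isVertex_of (n : ℕ) {x : Fin n → F} (hx0 : x ≠ 0) (i : Fin n) (hxi : x i = 0) :
    x ≠ 0 ∧ ∃ y : Fin n → F, y ≠ 0 ∧ x * y = 0 := by
  refine ⟨hx0, Pi.single i 1, ?_, ?_⟩
  · intro h
    have h' := congr_fun h i
    rw [Pi.single_eq_same] at h'
    simp at h'
  · funext j
    by_cases hji : j = i
    · subst hji; simp [Pi.single_eq_same, hxi]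
    · simp [Pi.single_eq_of_ne hji]

lemma zcount_bounds {n : ℕ} (x : zdVertex F n) :
    1 ≤ zcount F n x.1 ∧ zcount F n x.1 ≤ n - 1 := by
  constructor
  · obtain ⟨i, hi⟩ := exists_zero_of_vertex F x
    have hm : i ∈ Finset.univ.filter (fun i => x.1 i = 0) := by simp [hi]
    exact Finset.card_pos.mpr ⟨i, hm⟩
  · obtain ⟨i, hi⟩ := Function.ne_iff.mp x.2.1
    simp only [Pi.zero_apply] at hi
    have hsub : Finset.univ.filter (fun i => x.1 i = 0) ⊆ Finset.univ.erase i := by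
      intro a ha
      simp only [Finset.mem_filter] at ha
      exact Finset.mem_erase.mpr ⟨fun h => hi (h ▸ ha.2), Finset.mem_univ _⟩
    have h := Finset.card_le_card hsub
    rw [Finset.card_erase_of_mem (Finset.mem_univ i), Finset.card_univ, Fintype.card_fin] at h
    exact h

noncomputable def cls (n : ℕ) (hn : 2 ≤ n) (x : zdVertex F n) : Fin (n-1) :=
  ⟨zcount F n x.1 - 1, by have := zcount_bounds F x; omega⟩

lemma adj_iff {n : ℕ} (x y : zdVertex F n) :
    (zdGraph F n).Adj x y ↔ suppF F n y.1 ⊆ Finset.univ.filter (fun i => x.1 i = 0) := by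
  constructor
  · intro hadj i hi
    obtain ⟨hne, hmul⟩ : x ≠ y ∧ x.1 * y.1 = 0 := hadj
    simp only [suppF, Finset.mem_filter, Finset.mem_univ, true_and] at hi ⊢
    have h := congr_fun hmul i
    simp only [Pi.mul_apply, Pi.zero_apply] at h
    rcases mul_eq_zero.mp h with h' | h'
    · exact h'
    · exact absurd h' hi
  · intro hsub
    have hmul : x.1 * y.1 = 0 := by
      funext i
      by_cases hyi : y.1 i = 0
      · simp [hyi]
      · have hm : i ∈ suppF F n y.1 := by simp [suppF, hyi]
        have h := Finset.mem_filter.mp (hsub hm)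
        simp [h.2]
    refine (⟨?_, hmul⟩ : x ≠ y ∧ x.1 * y.1 = 0)
    obtain ⟨i, hi⟩ := Function.ne_iff.mp x.2.1
    simp only [Pi.zero_apply] at hi
    intro h
    have hyi : y.1 i = 0 := by
      by_contra hyi
      have hm : i ∈ suppF F n y.1 := by simp [suppF, hyi]
      exact hi ((Finset.mem_filter.mp (hsub hm)).2)
    rw [h] at hi
    exact hi hyi

lemma card_supp_eq (n : ℕ) (T : Finset (Fin n)) :
    (Finset.univ.filter fun y : Fin n → F => suppF F n y = T).card
      = (Fintype.card F - 1) ^ T.card := by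
  rw [← Fintype.card_subtype]
  have hmem : ∀ (y : {y : Fin n → F // suppF F n y = T}) (i : Fin n), i ∈ T → y.1 i ≠ 0 := by
    intro y i hi
    have hm : i ∈ suppF F n y.1 := by rw [y.2]; exact hi
    simpa [suppF] using hm
  have e : {y : Fin n → F // suppF F n y = T} ≃ (T → {a : F // a ≠ 0}) :=
    { toFun := fun y i => ⟨y.1 i, hmem y i i.2⟩
      invFun := fun f => ⟨fun i => if h : i ∈ T then (f ⟨i, h⟩).1 else 0, by
        apply Finset.ext
        intro i
        simp only [suppF, Finset.mem_filter, Finset.mem_univ, true_and]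
        by_cases h : i ∈ T
        · simp [h, (f ⟨i, h⟩).2]
        · simp [h]⟩
      left_inv := fun y => by
        apply Subtype.ext; funext i
        by_cases h : i ∈ T
        · simp [h]
        · simp only [dif_neg h]
          have hm : i ∉ suppF F n y.1 := by rw [y.2]; exact h
          have : ¬ (y.1 i ≠ 0) := by simpa [suppF] using hm
          exact (not_not.mp this).symm
      right_inv := fun f => by
        funext i
        apply Subtype.ext
        simp }
  rw [Fintype.card_congr e, Fintype.card_fun, Fintype.card_coe]
  congr 1
  rw [Fintype.card_subtype_compl, Fintype.card_subtype_eq]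

end ZD

namespace ZD
variable (F : Type) [Field F] [Fintype F]
set_option linter.unusedSectionVars false

lemma neighbor_count (n : ℕ) (hn : 2 ≤ n) (x : zdVertex F n) (j : Fin (n-1)) :
    (((zdGraph F n).neighborFinset x).filter (fun y => cls F n hn y = j)).card
      = (zcount F n x.1).choose (n - (j.val+1)) * (Fintype.card F - 1) ^ (n - (j.val+1)) := by
  set Z : Finset (Fin n) := Finset.univ.filter (fun i => x.1 i = 0) with hZ
  set t : ℕ := n - (j.val + 1) with ht
  have htj : j.val < n - 1 := j.isLt
  have ht1 : 1 ≤ t := by omega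
  have step1 : (((zdGraph F n).neighborFinset x).filter (fun y => cls F n hn y = j)).card
      = (Finset.univ.filter fun y : Fin n → F =>
          suppF F n y ⊆ Z ∧ (suppF F n y).card = t).card := by
    apply Finset.card_bij (fun y _ => y.1)
    · intro y hy
      rw [Finset.mem_filter, SimpleGraph.mem_neighborFinset] at hy
      obtain ⟨hadj, hcls⟩ := hy
      have hsub := (adj_iff F x y).mp hadj
      have hzb := zcount_bounds F y
      have hzy : zcount F n y.1 = j.val + 1 := by
        have hv : zcount F n y.1 - 1 = j.val := congrArg Fin.val hcls
        omega
      have hcard := zcount_add_supp F n y.1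
      simp only [Finset.mem_filter, Finset.mem_univ, true_and]
      exact ⟨hsub, by omega⟩
    · intro a ha b hb hab
      exact Subtype.ext hab
    · intro y hy
      rw [Finset.mem_filter] at hy
      obtain ⟨-, hsub, hcard⟩ := hy
      have hy0 : y ≠ 0 := by
        intro h
        rw [h] at hcard
        have he : suppF F n (0 : Fin n → F) = ∅ := by
          apply Finset.eq_empty_of_forall_notMem; intro i; simp [suppF]
        rw [he] at hcard
        simp at hcard
        omega
      have hz : zcount F n y = j.val + 1 := by
        have := zcount_add_supp F n y
        omega
      have hzc : ∃ i, y i = 0 := by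
        have hpos : 0 < zcount F n y := by omega
        obtain ⟨i, hi⟩ := Finset.card_pos.mp hpos
        exact ⟨i, (Finset.mem_filter.mp hi).2⟩
      obtain ⟨i0, hi0⟩ := hzc
      refine ⟨⟨y, isVertex_of F n hy0 i0 hi0⟩, ?_, rfl⟩
      rw [Finset.mem_filter, SimpleGraph.mem_neighborFinset]
      refine ⟨(adj_iff F x _).mpr hsub, ?_⟩
      apply Fin.ext
      show zcount F n y - 1 = j.val
      omega
  rw [step1]
  have H : ∀ y ∈ (Finset.univ.filter fun y : Fin n → F =>
        suppF F n y ⊆ Z ∧ (suppF F n y).card = t),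
      suppF F n y ∈ Finset.powersetCard t Z := by
    intro y hy
    rw [Finset.mem_filter] at hy
    exact Finset.mem_powersetCard.mpr ⟨hy.2.1, hy.2.2⟩
  rw [Finset.card_eq_sum_card_fiberwise H]
  have fib : ∀ T ∈ Finset.powersetCard t Z,
      ((Finset.univ.filter fun y : Fin n → F =>
          suppF F n y ⊆ Z ∧ (suppF F n y).card = t).filter
        (fun y => suppF F n y = T)).card = (Fintype.card F - 1) ^ t := by
    intro T hT
    obtain ⟨hTZ, hTc⟩ := Finset.mem_powersetCard.mp hT
    have heq : ((Finset.univ.filter fun y : Fin n → F =>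
          suppF F n y ⊆ Z ∧ (suppF F n y).card = t).filter
        (fun y => suppF F n y = T)) = Finset.univ.filter (fun y => suppF F n y = T) := by
      apply Finset.ext; intro y
      simp only [Finset.mem_filter, Finset.mem_univ, true_and]
      constructor
      · rintro ⟨_, h⟩; exact h
      · intro h
        refine ⟨⟨?_, ?_⟩, h⟩
        · rw [h]; exact hTZ
        · rw [h]; exact hTc
    rw [heq, card_supp_eq, hTc]
  rw [Finset.sum_congr rfl fib, Finset.sum_const, Finset.card_powersetCard, smul_eq_mul]
  rfl

lemma cls_surjective (n : ℕ) (hn : 2 ≤ n) : Function.Surjective (cls F n hn) := by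
  intro j
  have hc : j.val + 1 < n := by have := j.isLt; omega
  set b : Fin n := ⟨j.val + 1, hc⟩ with hb
  set x : Fin n → F := fun idx => if idx < b then 0 else 1 with hx
  have hxb : x b = 1 := by simp [hx]
  have hx0 : x ≠ 0 := by
    intro h
    have h' := congr_fun h b
    rw [hxb] at h'
    simp at h'
  have h0n : (0:ℕ) < n := by omega
  have hx00 : x ⟨0, h0n⟩ = 0 := by
    simp only [hx]
    rw [if_pos]
    rw [Fin.lt_def]
    simp [hb]
  refine ⟨⟨x, isVertex_of F n hx0 _ hx00⟩, ?_⟩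
  apply Fin.ext
  show zcount F n x - 1 = j.val
  have hzx : zcount F n x = j.val + 1 := by
    rw [zcount]
    have hfe : (Finset.univ.filter fun i => x i = 0) = Finset.Iio b := by
      apply Finset.ext; intro i
      simp only [Finset.mem_filter, Finset.mem_univ, true_and, Finset.mem_Iio, hx]
      by_cases h : i < b
      · simp [h]
      · simp [h]
    rw [hfe]
    simp [hb]
  omega

lemma adjMatrix_mulVec_comp (m n : ℕ) (hm : Fintype.card F = m) (hn : 2 ≤ n)
    (g : Fin (n-1) → ℝ) :
    (zdGraph F n).adjMatrix ℝ *ᵥ (fun x => g (cls F n hn x))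
      = fun x => (Pmat m n *ᵥ g) (cls F n hn x) := by
  funext x
  rw [SimpleGraph.adjMatrix_mulVec_apply]
  rw [← Finset.sum_fiberwise ((zdGraph F n).neighborFinset x) (cls F n hn)
    (fun y => g (cls F n hn y))]
  show _ = (Pmat m n *ᵥ g) (cls F n hn x)
  rw [mulVec, dotProduct]
  apply Finset.sum_congr rfl
  intro j _
  have hcg : ∀ y ∈ ((zdGraph F n).neighborFinset x).filter (fun y => cls F n hn y = j),
      g (cls F n hn y) = g j := by
    intro y hy; rw [(Finset.mem_filter.mp hy).2]
  rw [Finset.sum_congr rfl hcg, Finset.sum_const, nsmul_eq_mul, neighbor_count F n hn x j]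
  rw [Pmat_apply]
  have hzb := zcount_bounds F x
  have hcv : (cls F n hn x).val + 1 = zcount F n x.1 := by
    show zcount F n x.1 - 1 + 1 = zcount F n x.1
    omega
  rw [hcv, hm]
  have h1m : 1 ≤ m := by
    have h2 : (1:ℕ) < Fintype.card F := Fintype.one_lt_card
    omega
  push_cast [Nat.cast_sub h1m]
  ring

lemma pow_mulVec_one (m n : ℕ) (hm : Fintype.card F = m) (hn : 2 ≤ n) (k : ℕ) :
    ((zdGraph F n).adjMatrix ℝ)^k *ᵥ (fun _ => (1:ℝ))
      = fun x => ((Pmat m n)^k *ᵥ (fun _ => 1)) (cls F n hn x) := by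
  induction k with
  | zero => simp [Matrix.one_mulVec]
  | succ k ih =>
      rw [pow_succ', ← Matrix.mulVec_mulVec, ih,
        adjMatrix_mulVec_comp F m n hm hn ((Pmat m n)^k *ᵥ fun _ => 1),
        pow_succ' (Pmat m n), ← Matrix.mulVec_mulVec]

noncomputable def Ugraph (n : ℕ) : Submodule ℝ (zdVertex F n → ℝ) :=
  Submodule.span ℝ (Set.range fun k : ℕ => ((zdGraph F n).adjMatrix ℝ)^k *ᵥ fun _ => 1)

lemma finrank_Ugraph (m n : ℕ) (hm : Fintype.card F = m) (hn : 2 ≤ n) :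
    Module.finrank ℝ (Ugraph F n) = n - 1 := by
  have hm2 : 2 ≤ m := by
    have h2 : (1:ℕ) < Fintype.card F := Fintype.one_lt_card
    omega
  set Φ := LinearMap.funLeft ℝ ℝ (cls F n hn) with hΦ
  have hinj : Function.Injective Φ :=
    LinearMap.funLeft_injective_of_surjective ℝ ℝ _ (cls_surjective F n hn)
  have hmap : Ugraph F n = Submodule.map Φ (Uspan m n) := by
    rw [Ugraph, Uspan, Submodule.map_span]
    congr 1
    rw [← Set.range_comp]
    apply congrArg Set.range
    funext k
    show ((zdGraph F n).adjMatrix ℝ)^k *ᵥ (fun _ => 1) = Φ ((Pmat m n)^k *ᵥ fun _ => 1)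
    rw [pow_mulVec_one F m n hm hn k]
    rfl
  rw [hmap]
  rw [← LinearEquiv.finrank_eq (Submodule.equivMapOfInjective Φ hinj (Uspan m n))]
  exact finrank_Uspan m n hm2 hn

end ZD

namespace ZD
variable (F : Type) [Field F] [Fintype F]
set_option linter.unusedSectionVars false

lemma adjMatrix_isHermitian (n : ℕ) : ((zdGraph F n).adjMatrix ℝ).IsHermitian := by
  have h := SimpleGraph.isSymm_adjMatrix (zdGraph F n) (α := ℝ)
  rw [Matrix.IsHermitian]
  rw [Matrix.IsSymm] at h
  rw [← h]
  ext i j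
  simp [Matrix.conjTranspose_apply, Matrix.transpose_apply]

lemma dot_mulVec_eigen (n : ℕ) {v : zdVertex F n → ℝ} {μ : ℝ}
    (hv : (zdGraph F n).adjMatrix ℝ *ᵥ v = μ • v) (x : zdVertex F n → ℝ) :
    v ⬝ᵥ ((zdGraph F n).adjMatrix ℝ *ᵥ x) = μ * (v ⬝ᵥ x) := by
  rw [Matrix.dotProduct_mulVec]
  have h1 : v ᵥ* (zdGraph F n).adjMatrix ℝ = ((zdGraph F n).adjMatrix ℝ)ᵀ *ᵥ v := by
    rw [Matrix.mulVec_transpose]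
  have h2 : ((zdGraph F n).adjMatrix ℝ)ᵀ = (zdGraph F n).adjMatrix ℝ :=
    SimpleGraph.isSymm_adjMatrix _
  rw [h1, h2, hv]
  rw [smul_dotProduct]
  rfl

lemma card_le_finrank (n : ℕ) (hn : 2 ≤ n) (T : Finset ℝ)
    (hT : ↑T ⊆ mainEigs (zdGraph F n)) :
    T.card ≤ Module.finrank ℝ (Ugraph F n) := by
  classical
  have hch : ∀ μ : {x // x ∈ T}, ∃ v : zdVertex F n → ℝ, v ≠ 0 ∧
      (zdGraph F n).adjMatrix ℝ *ᵥ v = (μ:ℝ) • v ∧ ∑ i, v i ≠ 0 := fun μ => hT μ.2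
  choose v hv0 hvA hvs using hch
  set A := (zdGraph F n).adjMatrix ℝ with hAdef
  let ψ : (zdVertex F n → ℝ) →ₗ[ℝ] ({x // x ∈ T} → ℝ) :=
    { toFun := fun x μ => v μ ⬝ᵥ x
      map_add' := by intros a b; funext μ; simp [dotProduct_add]
      map_smul' := by intros c a; funext μ; simp [dotProduct_smul] }
  have hψk : ∀ k (μ : {x // x ∈ T}),
      ψ (A^k *ᵥ fun _ => 1) μ = (μ:ℝ)^k * (∑ i, v μ i) := by
    intro k
    induction k with
    | zero =>
        intro μ
        show v μ ⬝ᵥ ((1 : Matrix _ _ ℝ) *ᵥ fun _ => 1) = _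
        rw [Matrix.one_mulVec]
        simp [dotProduct]
    | succ k ih =>
        intro μ
        show v μ ⬝ᵥ (A^(k+1) *ᵥ fun _ => 1) = _
        rw [pow_succ', ← Matrix.mulVec_mulVec]
        rw [dot_mulVec_eigen F n (hvA μ)]
        have hh : v μ ⬝ᵥ (A ^ k *ᵥ fun _ => (1:ℝ)) = (μ:ℝ)^k * ∑ i, v μ i := ih μ
        rw [hh]
        ring
  set c := T.card with hc
  set eT : Fin c ≃ {x // x ∈ T} := T.equivFin.symm with heT
  set s : {x // x ∈ T} → ℝ := fun μ => ∑ i, v μ i with hs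
  set M : Matrix (Fin c) (Fin c) ℝ :=
    (Matrix.vandermonde fun l => ((eT l : ℝ)))ᵀ * Matrix.diagonal (fun l => s (eT l)) with hM
  have hMdet : M.det ≠ 0 := by
    rw [hM, Matrix.det_mul, Matrix.det_transpose, Matrix.det_diagonal]
    apply mul_ne_zero
    · rw [Matrix.det_vandermonde_ne_zero_iff]
      exact Subtype.coe_injective.comp eT.injective
    · exact Finset.prod_ne_zero_iff.2 fun l _ => hvs (eT l)
  have hMrows : LinearIndependent ℝ (fun k : Fin c => M k) :=
    Matrix.linearIndependent_rows_iff_isUnit.2 ((Matrix.isUnit_iff_isUnit_det M).2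
      (isUnit_iff_ne_zero.2 hMdet))
  let Eq : (Fin c → ℝ) ≃ₗ[ℝ] ({x // x ∈ T} → ℝ) := LinearEquiv.funCongrLeft ℝ ℝ eT.symm
  set g : Fin c → ({x // x ∈ T} → ℝ) := fun k => ψ (A^(k:ℕ) *ᵥ fun _ => 1) with hg
  have hgM : g = (Eq : (Fin c → ℝ) →ₗ[ℝ] _) ∘ (fun k : Fin c => M k) := by
    funext k
    funext μ
    have h1 : g k μ = (μ:ℝ)^(k:ℕ) * s μ := hψk (k:ℕ) μ
    have h2 : ((Eq : (Fin c → ℝ) →ₗ[ℝ] ({x // x ∈ T} → ℝ)) ∘ (fun k : Fin c => M k)) k μ = M k (eT.symm μ) := rfl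
    rw [h1, h2, hM]
    rw [Matrix.mul_diagonal]
    rw [Matrix.transpose_apply, Matrix.vandermonde]
    show (μ:ℝ)^(k:ℕ) * s μ = ((eT (eT.symm μ) : ℝ))^(k:ℕ) * s (eT (eT.symm μ))
    rw [Equiv.apply_symm_apply]
  have hgind : LinearIndependent ℝ g := by
    rw [hgM]
    exact hMrows.map' Eq.toLinearMap (LinearMap.ker_eq_bot.mpr Eq.injective)
  have hsub : Submodule.span ℝ (Set.range g) ≤ Submodule.map ψ (Ugraph F n) := by
    rw [Submodule.span_le]
    rintro _ ⟨k, rfl⟩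
    exact ⟨A^(k:ℕ) *ᵥ fun _ => 1, Submodule.subset_span ⟨(k:ℕ), rfl⟩, rfl⟩
  calc T.card = c := rfl
  _ = Module.finrank ℝ (Submodule.span ℝ (Set.range g)) := by
      rw [finrank_span_eq_card hgind, Fintype.card_fin]
  _ ≤ Module.finrank ℝ (Submodule.map ψ (Ugraph F n)) := Submodule.finrank_mono hsub
  _ ≤ Module.finrank ℝ (Ugraph F n) := Submodule.finrank_map_le ψ _

end ZD

namespace ZD
variable (F : Type) [Field F] [Fintype F]
set_option linter.unusedSectionVars false
set_option maxHeartbeats 1000000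

lemma exists_finset_mainEigs (n : ℕ) (hn : 2 ≤ n) :
    ∃ T : Finset ℝ, ↑T ⊆ mainEigs (zdGraph F n) ∧
      Module.finrank ℝ (Ugraph F n) ≤ T.card := by
  classical
  set A := (zdGraph F n).adjMatrix ℝ with hAdef
  have hA : A.IsHermitian := adjMatrix_isHermitian F n
  set b := hA.eigenvectorBasis with hb
  set lam := hA.eigenvalues with hlam
  set vv : zdVertex F n → (zdVertex F n → ℝ) := fun i => (WithLp.equiv 2 _) (b i) with hvv
  have hAv : ∀ i, A *ᵥ vv i = lam i • vv i := fun i => hA.mulVec_eigenvectorBasis i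
  have hAvk : ∀ (k : ℕ) i, A^k *ᵥ vv i = (lam i)^k • vv i := by
    intro k i
    induction k with
    | zero => simp [Matrix.one_mulVec]
    | succ k ih =>
        rw [pow_succ', ← Matrix.mulVec_mulVec, ih, Matrix.mulVec_smul, hAv i,
          smul_smul, pow_succ', mul_comm]
  set one : EuclideanSpace ℝ (zdVertex F n) := (WithLp.equiv 2 _).symm (fun _ => 1) with hone
  set a : zdVertex F n → ℝ := fun i => b.repr one i with ha
  have hsum : ∑ i, a i • vv i = (fun _ => (1:ℝ)) := by
    have h := congrArg (fun f => WithLp.equiv 2 _ f) (b.sum_repr one)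
    simpa [hone, hvv, ha] using h
  have ha' : ∀ i, a i = ∑ x, vv i x := by
    intro i
    show b.repr one i = _
    rw [OrthonormalBasis.repr_apply_apply]
    rw [PiLp.inner_apply]
    apply Finset.sum_congr rfl
    intro x _
    simp [RCLike.inner_apply, hone]
    rfl
  set T : Finset ℝ := (Finset.univ.filter fun i => a i ≠ 0).image lam with hT
  set wfun : ℝ → (zdVertex F n → ℝ) :=
    fun μ => ∑ i ∈ Finset.univ.filter (fun i => lam i = μ), a i • vv i with hwfun
  have hwfun' : ∀ μ, wfun μ = ∑ i ∈ Finset.univ.filter (fun i => lam i = μ), a i • vv i :=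
    fun μ => rfl
  have hwsum : ∀ μ, ∑ x, wfun μ x = ∑ i ∈ Finset.univ.filter (fun i => lam i = μ), (a i)^2 := by
    intro μ
    rw [hwfun' μ]
    have h1 : ∀ x, (∑ i ∈ Finset.univ.filter (fun i => lam i = μ), a i • vv i) x
        = ∑ i ∈ Finset.univ.filter (fun i => lam i = μ), a i * vv i x := by
      intro x
      rw [Finset.sum_apply]
      rfl
    rw [Finset.sum_congr rfl fun x _ => h1 x]
    rw [Finset.sum_comm]
    apply Finset.sum_congr rfl
    intro i _
    rw [← Finset.mul_sum, ← ha' i]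
    ring
  have hAw : ∀ μ, A *ᵥ wfun μ = μ • wfun μ := by
    intro μ
    rw [hwfun' μ]
    rw [← Matrix.mulVecLin_apply, map_sum (Matrix.mulVecLin A) _ _]
    · rw [Finset.smul_sum]
      apply Finset.sum_congr rfl
      intro i hi
      have hli : lam i = μ := (Finset.mem_filter.mp hi).2
      show A *ᵥ (a i • vv i) = μ • (a i • vv i)
      rw [Matrix.mulVec_smul, hAv i, hli, smul_comm]
  have hTmain : ↑T ⊆ mainEigs (zdGraph F n) := by
    intro μ hμ
    simp only [hT, Finset.coe_image, Set.mem_image, Finset.mem_coe, Finset.mem_filter] at hμ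
    obtain ⟨i0, ⟨-, hi0⟩, rfl⟩ := hμ
    have hpos : 0 < ∑ i ∈ Finset.univ.filter (fun i => lam i = lam i0), (a i)^2 := by
      apply Finset.sum_pos'
      · intro i _; positivity
      · exact ⟨i0, by simp, by positivity⟩
    have hs0 : ∑ x, wfun (lam i0) x ≠ 0 := by
      rw [hwsum]; exact ne_of_gt hpos
    refine ⟨wfun (lam i0), ?_, hAw (lam i0), hs0⟩
    intro h
    rw [h] at hs0
    simp at hs0
  refine ⟨T, hTmain, ?_⟩
  have hgen : ∀ k : ℕ, A^k *ᵥ (fun _ => (1:ℝ)) = ∑ μ ∈ T, (μ:ℝ)^k • wfun μ := by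
    intro k
    have h1 : A^k *ᵥ (fun _ => (1:ℝ)) = ∑ i, (lam i)^k • (a i • vv i) := by
      rw [← hsum, ← Matrix.mulVecLin_apply, map_sum (Matrix.mulVecLin (A^k)) _ _]
      apply Finset.sum_congr rfl
      intro i _
      show A^k *ᵥ (a i • vv i) = (lam i)^k • (a i • vv i)
      rw [Matrix.mulVec_smul, hAvk k i, smul_comm]
    rw [h1]
    have h2 : ∑ i, (lam i)^k • (a i • vv i)
        = ∑ i ∈ Finset.univ.filter (fun i => a i ≠ 0), (lam i)^k • (a i • vv i) := by
      symm
      apply Finset.sum_filter_of_ne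
      intro i _ hne
      intro hai
      apply hne
      rw [hai, zero_smul, smul_zero]
    rw [h2]
    rw [← Finset.sum_fiberwise_of_maps_to (g := lam) (t := T)
      (fun i hi => Finset.mem_image_of_mem lam hi)]
    apply Finset.sum_congr rfl
    intro μ hμ
    have h3 : ∀ i ∈ (Finset.univ.filter fun i => a i ≠ 0).filter (fun i => lam i = μ),
        (lam i)^k • (a i • vv i) = μ^k • (a i • vv i) := by
      intro i hi
      rw [(Finset.mem_filter.mp hi).2]
    rw [Finset.sum_congr rfl h3, ← Finset.smul_sum]
    congr 1
    rw [hwfun' μ]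
    apply Finset.sum_subset
    · intro i hi
      rw [Finset.mem_filter] at hi ⊢
      exact ⟨Finset.mem_univ _, hi.2⟩
    · intro i hi hni
      have hlam_i : lam i = μ := (Finset.mem_filter.mp hi).2
      have hai : a i = 0 := by
        by_contra hai
        apply hni
        rw [Finset.mem_filter]
        exact ⟨Finset.mem_filter.mpr ⟨Finset.mem_univ _, hai⟩, hlam_i⟩
      rw [hai, zero_smul]
  have hUle : Ugraph F n ≤ Submodule.span ℝ ((wfun '' ↑T : Set _)) := by
    rw [Ugraph, Submodule.span_le]
    rintro _ ⟨k, rfl⟩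
    show A^k *ᵥ (fun _ => 1) ∈ _
    rw [hgen k]
    apply Submodule.sum_mem
    intro μ hμ
    exact Submodule.smul_mem _ _ (Submodule.subset_span ⟨μ, hμ, rfl⟩)
  calc Module.finrank ℝ (Ugraph F n)
      ≤ Module.finrank ℝ (Submodule.span ℝ (wfun '' ↑T)) := Submodule.finrank_mono hUle
  _ ≤ (T.image wfun).card := by
      rw [← Finset.coe_image]
      exact finrank_span_finset_le_card (T.image wfun)
  _ ≤ T.card := Finset.card_image_le

end ZD

/-- The zero-divisor graph `Γ(R_n)` has exactly `n − 1` distinct main eigenvalues. -/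
theorem zdGraph_card_mainEigs (F : Type) [Field F] [Fintype F] (m n : ℕ)
    (hm : Fintype.card F = m) (hn : 2 ≤ n) :
    (mainEigs (zdGraph F n)).ncard = n - 1 := by
  classical
  have hfr : Module.finrank ℝ (ZD.Ugraph F n) = n - 1 := ZD.finrank_Ugraph F m n hm hn
  have hub : ∀ T : Finset ℝ, ↑T ⊆ mainEigs (zdGraph F n) → T.card ≤ n - 1 := by
    intro T hT
    have h := ZD.card_le_finrank F n hn T hT
    omega
  have hfin : (mainEigs (zdGraph F n)).Finite := by
    by_contra hinf
    obtain ⟨T, hsub, hcard⟩ := (Set.Infinite.exists_subset_card_eq hinf n)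
    have := hub T hsub
    omega
  obtain ⟨T0, hT0sub, hT0⟩ := ZD.exists_finset_mainEigs F n hn
  apply le_antisymm
  · rw [Set.ncard_eq_toFinset_card _ hfin]
    apply hub
    rw [Set.Finite.coe_toFinset]
  · have h1 : (T0 : Set ℝ).ncard ≤ (mainEigs (zdGraph F n)).ncard :=
      Set.ncard_le_ncard hT0sub hfin
    rw [Set.ncard_coe_finset] at h1
    omega
end

section
/- Let F be a finite field with m elements and let n ≥ 2 be an integer. The set of main eigenvalues of the zero-divisor graph Γ(R_n) equals the set of real eigenvalues of the matrix P[m,n] (real numbers λ for which P[m,n]·v = λ·v for some nonzero real vector v), and moreover 0 is not an eigenvalue of P[m,n]; in particular, every main eigenvalue of Γ(R_n) is nonzero. -/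
attribute [local instance] Classical.propDecidable

open Matrix

/-! ### Auxiliary lemmas -/

namespace ZDAux

lemma genFib_zero (α : ℝ) : genFib α 0 = 1 := rfl
lemma genFib_one (α : ℝ) : genFib α 1 = 1 := rfl
lemma genFib_add_two (α : ℝ) (k : ℕ) :
    genFib α (k + 2) = genFib α (k + 1) + (α - 1) * genFib α k := rfl

lemma genFib_pos {α : ℝ} (hα : 1 ≤ α) : ∀ k, 0 < genFib α k := by
  have h : ∀ k, 0 < genFib α k ∧ 0 < genFib α (k + 1) := by
    intro k
    induction k with
    | zero => constructor <;> · rw [genFib]; norm_num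
    | succ k ih =>
      refine ⟨ih.2, ?_⟩
      rw [genFib_add_two]
      nlinarith [ih.1, ih.2]
  exact fun k => (h k).1

/-- Cross term `F_j F_{k+1} - F_{j+1} F_k`. -/
noncomputable def cross (α : ℝ) (j k : ℕ) : ℝ :=
  genFib α j * genFib α (k + 1) - genFib α (j + 1) * genFib α k

lemma cross_self (α : ℝ) (j : ℕ) : cross α j j = 0 := by
  simp [cross, mul_comm]

lemma cross_rec (α : ℝ) (j k : ℕ) :
    cross α j (k + 2) = cross α j (k + 1) + (α - 1) * cross α j k := by
  simp only [cross, genFib_add_two]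
  ring

lemma cross_diag (α : ℝ) : ∀ j, cross α j (j + 1) = (-(α - 1)) ^ j * (α - 1) := by
  have h2 : genFib α 2 = α := by
    rw [show (2:ℕ) = 0 + 2 from rfl, genFib_add_two, genFib_one, genFib_zero]; ring
  intro j
  induction j with
  | zero =>
    simp only [cross, zero_add, genFib_zero, genFib_one, h2, pow_zero]
    ring
  | succ j ih =>
    have hstep : cross α (j + 1) (j + 2) = -(α - 1) * cross α j (j + 1) := by
      simp only [cross, genFib_add_two]
      ring
    set β := -(α - 1) with hβ
    rw [hstep, ih, pow_succ]
    ring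

lemma cross_pos_signed {α : ℝ} (hα : 1 < α) (j : ℕ) :
    ∀ t, 0 ≤ (-1 : ℝ) ^ j * cross α j (j + t) ∧ 0 < (-1 : ℝ) ^ j * cross α j (j + t + 1) := by
  have hsq : (-1 : ℝ) ^ j * (-1 : ℝ) ^ j = 1 := by
    rw [← mul_pow]; norm_num
  have hbase : 0 < (-1 : ℝ) ^ j * cross α j (j + 1) := by
    have heq : (-1 : ℝ) ^ j * cross α j (j + 1) = (α - 1) ^ (j + 1) := by
      rw [cross_diag, neg_pow (α - 1)]
      calc (-1:ℝ) ^ j * ((-1:ℝ) ^ j * (α - 1) ^ j * (α - 1))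
          = ((-1:ℝ) ^ j * (-1:ℝ) ^ j) * ((α - 1) ^ j * (α - 1)) := by ring
        _ = (α - 1) ^ (j + 1) := by rw [hsq, pow_succ]; ring
    rw [heq]
    exact pow_pos (by linarith) _
  intro t
  induction t with
  | zero =>
    refine ⟨le_of_eq ?_, hbase⟩
    show (0:ℝ) = (-1 : ℝ) ^ j * cross α j j
    rw [cross_self, mul_zero]
  | succ t ih =>
    refine ⟨le_of_lt ih.2, ?_⟩
    show (0:ℝ) < (-1 : ℝ) ^ j * cross α j (j + t + 2)
    have hrec : cross α j (j + t + 2) = cross α j (j + t + 1) + (α - 1) * cross α j (j + t) :=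
      cross_rec α j (j + t)
    have heq : (-1 : ℝ) ^ j * cross α j (j + t + 2) =
        (-1 : ℝ) ^ j * cross α j (j + t + 1) + (α - 1) * ((-1 : ℝ) ^ j * cross α j (j + t)) := by
      rw [hrec]; ring
    rw [heq]
    nlinarith [ih.1, ih.2]

lemma cross_ne_zero {α : ℝ} (hα : 1 < α) {j k : ℕ} (h : j < k) : cross α j k ≠ 0 := by
  obtain ⟨t, rfl⟩ : ∃ t, k = j + t + 1 := ⟨k - j - 1, by omega⟩
  have := (cross_pos_signed hα j t).2
  intro h0
  rw [h0, mul_zero] at this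
  exact lt_irrefl 0 this

/-- The vectors `w_k` with `(w_k)_i = F_k^{n-1-i} F_{k+1}^{i+1}`. -/
noncomputable def wvec (m n k : ℕ) : Fin (n - 1) → ℝ :=
  fun i => genFib m k ^ (n - 1 - (i : ℕ)) * genFib m (k + 1) ^ ((i : ℕ) + 1)

lemma wvec_zero (m n : ℕ) : wvec m n 0 = fun _ => (1 : ℝ) := by
  funext i
  simp [wvec, genFib_zero, genFib_one]

/-- Summand used in proving `Pmat_mulVec_wvec`. -/
noncomputable def Gfun (m n ik k t : ℕ) : ℝ :=
  (((m:ℝ) - 1) * genFib m k) ^ t * genFib m (k + 1) ^ (ik + 1 - t) *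
    ((ik + 1).choose t : ℝ) * genFib m (k + 1) ^ (n - 1 - ik)

lemma sum_Gfun (m n ik k : ℕ) :
    ∑ t ∈ Finset.range (ik + 1 + 1), Gfun m n ik k t
      = genFib m (k + 1) ^ (n - 1 - ik) * genFib m (k + 2) ^ (ik + 1) := by
  have hbin := add_pow (((m:ℝ) - 1) * genFib m k) (genFib m (k + 1)) (ik + 1)
  have : ∑ t ∈ Finset.range (ik + 1 + 1), Gfun m n ik k t
      = (∑ t ∈ Finset.range (ik + 1 + 1),
          (((m:ℝ) - 1) * genFib m k) ^ t * genFib m (k + 1) ^ (ik + 1 - t) *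
            ((ik + 1).choose t : ℝ)) * genFib m (k + 1) ^ (n - 1 - ik) := by
    simp only [Gfun]
    rw [Finset.sum_mul]
  rw [this, ← hbin]
  have h2 : ((m:ℝ) - 1) * genFib m k + genFib m (k + 1) = genFib m (k + 2) := by
    rw [genFib_add_two]; ring
  rw [h2]
  ring

lemma Pmat_mulVec_wvec (m n : ℕ) (hn : 2 ≤ n) (k : ℕ) :
    Pmat m n *ᵥ wvec m n k = fun i => wvec m n (k + 1) i - genFib m (k + 1) ^ n := by
  funext i
  have hi : (i : ℕ) < n - 1 := i.isLt
  show ∑ j : Fin (n - 1), Pmat m n i j * wvec m n k j = _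
  have e1 : ∑ j : Fin (n - 1), Pmat m n i j * wvec m n k j
      = ∑ j ∈ Finset.range (n - 1), (fun t : ℕ =>
          (if n ≤ ((i:ℕ) + 1) + (t + 1) then
            ((((i:ℕ) + 1).choose (n - (t + 1))) : ℝ) * ((m:ℝ) - 1) ^ (n - (t + 1)) else 0)
          * (genFib m k ^ (n - 1 - t) * genFib m (k + 1) ^ (t + 1))) j := by
    rw [← Fin.sum_univ_eq_sum_range]
    exact Finset.sum_congr rfl fun j _ => rfl
  rw [e1, ← Finset.sum_range_reflect]
  have e2 : ∀ κ ∈ Finset.range (n - 1), (fun t : ℕ =>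
          (if n ≤ ((i:ℕ) + 1) + (t + 1) then
            ((((i:ℕ) + 1).choose (n - (t + 1))) : ℝ) * ((m:ℝ) - 1) ^ (n - (t + 1)) else 0)
          * (genFib m k ^ (n - 1 - t) * genFib m (k + 1) ^ (t + 1))) (n - 1 - 1 - κ)
      = (if κ ≤ (i:ℕ) then Gfun m n (i:ℕ) k (κ + 1) else 0) := by
    intro κ hκ
    rw [Finset.mem_range] at hκ
    simp only []
    have h1 : n - (n - 1 - 1 - κ + 1) = κ + 1 := by omega
    have h2 : n - 1 - (n - 1 - 1 - κ) = κ + 1 := by omega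
    rw [h1, h2]
    by_cases hc : κ ≤ (i:ℕ)
    · rw [if_pos (by omega), if_pos hc]
      simp only [Gfun]
      have h3 : n - 1 - 1 - κ + 1 = ((i:ℕ) + 1 - (κ + 1)) + (n - 1 - (i:ℕ)) := by omega
      rw [h3, pow_add, mul_pow]
      ring
    · rw [if_neg (by omega), if_neg hc, zero_mul]
  rw [Finset.sum_congr rfl e2]
  have e3 : ∑ κ ∈ Finset.range (n - 1), (if κ ≤ (i:ℕ) then Gfun m n (i:ℕ) k (κ + 1) else 0)
      = ∑ κ ∈ Finset.range ((i:ℕ) + 1), (if κ ≤ (i:ℕ) then Gfun m n (i:ℕ) k (κ + 1) else 0) :=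
    (Finset.sum_subset (Finset.range_subset_range.mpr (by omega))
      (fun x _ hx => by rw [if_neg (by simp only [Finset.mem_range] at hx; omega)])).symm
  rw [e3, Finset.sum_congr rfl (fun κ hκ => if_pos (by
    simp only [Finset.mem_range] at hκ; omega))]
  have e4 : ∑ κ ∈ Finset.range ((i:ℕ) + 1), Gfun m n (i:ℕ) k (κ + 1)
      = ∑ t ∈ Finset.range ((i:ℕ) + 1 + 1), Gfun m n (i:ℕ) k t - Gfun m n (i:ℕ) k 0 := by
    rw [Finset.sum_range_succ' (Gfun m n (i:ℕ) k) ((i:ℕ) + 1)]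
    ring
  rw [e4, sum_Gfun]
  have hG0 : Gfun m n (i:ℕ) k 0 = genFib m (k + 1) ^ n := by
    simp only [Gfun, pow_zero, Nat.choose_zero_right, Nat.cast_one, one_mul, mul_one,
      Nat.sub_zero]
    rw [← pow_add]
    congr 1
    omega
  rw [hG0]
  rfl

/-! ### The matrix of the vectors `w_k` and its invertibility -/

/-- Matrix whose `k`-th row is `w_k`. -/
noncomputable def Wmat (m n : ℕ) : Matrix (Fin (n - 1)) (Fin (n - 1)) ℝ :=
  fun k i => wvec m n (k : ℕ) i

lemma det_Wmat_ne_zero {m n : ℕ} (hm : 2 ≤ m) (hn : 2 ≤ n) : (Wmat m n).det ≠ 0 := by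
  have hα : (1 : ℝ) < (m : ℝ) := by exact_mod_cast hm
  have hpos : ∀ k, 0 < genFib (m : ℝ) k := genFib_pos (le_of_lt hα)
  have hne : ∀ k, genFib (m : ℝ) k ≠ 0 := fun k => ne_of_gt (hpos k)
  set r : Fin (n - 1) → ℝ := fun k => genFib m ((k : ℕ) + 1) / genFib m (k : ℕ) with hr
  have hrpos : ∀ k, 0 < r k := fun k => div_pos (hpos _) (hpos _)
  have hW : Wmat m n
      = Matrix.diagonal (fun k : Fin (n - 1) => genFib (m : ℝ) (k : ℕ) ^ n * r k)
        * Matrix.vandermonde r := by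
    ext k i
    rw [Matrix.diagonal_mul, Matrix.vandermonde_apply]
    have hexp : (n - 1 - (i : ℕ)) + ((i : ℕ) + 1) = n := by
      have := i.isLt; omega
    show wvec m n (k : ℕ) i = _
    rw [hr]
    simp only [wvec]
    have ha : genFib (m : ℝ) (k : ℕ) ^ n
        = genFib (m : ℝ) (k : ℕ) ^ (n - 1 - (i : ℕ)) * genFib (m : ℝ) (k : ℕ) ^ ((i : ℕ) + 1) := by
      rw [← pow_add, hexp]
    rw [ha, div_pow, mul_assoc, div_mul_div_comm, ← pow_succ', ← pow_succ',
      ← mul_div_assoc, eq_div_iff (pow_ne_zero _ (hne _))]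
    ring
  rw [hW, Matrix.det_mul, Matrix.det_diagonal, Matrix.det_vandermonde]
  apply mul_ne_zero
  · rw [Finset.prod_ne_zero_iff]
    intro k _
    exact ne_of_gt (mul_pos (pow_pos (hpos _) _) (hrpos _))
  · rw [Finset.prod_ne_zero_iff]
    intro k _
    rw [Finset.prod_ne_zero_iff]
    intro j hj
    rw [Finset.mem_Ioi] at hj
    refine sub_ne_zero_of_ne ?_
    intro heq
    rw [hr] at heq
    simp only [] at heq
    have h2 : genFib (m : ℝ) ((k : ℕ) + 1) * genFib (m : ℝ) (j : ℕ)
        = genFib (m : ℝ) ((j : ℕ) + 1) * genFib (m : ℝ) (k : ℕ) :=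
      (div_eq_div_iff (hne _) (hne _)).mp heq.symm
    have hcross : cross (m : ℝ) (k : ℕ) (j : ℕ) = 0 := by
      simp only [cross]
      nlinarith [h2]
    exact cross_ne_zero hα (show (k : ℕ) < (j : ℕ) from hj) hcross
  
lemma Wmat_mulVec_eq_zero {m n : ℕ} (hm : 2 ≤ m) (hn : 2 ≤ n)
    {x : Fin (n - 1) → ℝ} (h : Wmat m n *ᵥ x = 0) : x = 0 := by
  have hu : IsUnit (Wmat m n).det := isUnit_iff_ne_zero.mpr (det_Wmat_ne_zero hm hn)
  calc x = (1 : Matrix (Fin (n - 1)) (Fin (n - 1)) ℝ) *ᵥ x := (Matrix.one_mulVec x).symm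
    _ = ((Wmat m n)⁻¹ * Wmat m n) *ᵥ x := by rw [Matrix.nonsing_inv_mul _ hu]
    _ = (Wmat m n)⁻¹ *ᵥ (Wmat m n *ᵥ x) := (Matrix.mulVec_mulVec x _ _).symm
    _ = 0 := by rw [h, Matrix.mulVec_zero]

/-! ### Any eigenvector of `Pmat` has nonzero inner product with the class sizes -/

lemma eig_inner_ne_zero {m n : ℕ} (hm : 2 ≤ m) (hn : 2 ≤ n)
    {s : Fin (n - 1) → ℝ} (hs : ∀ i, 0 < s i)
    (hsym : ∀ i j, s i * Pmat m n i j = s j * Pmat m n j i)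
    {μ : ℝ} {w : Fin (n - 1) → ℝ} (hw : w ≠ 0) (hPw : Pmat m n *ᵥ w = μ • w) :
    ∑ i, s i * w i ≠ 0 := by
  intro hzero
  have key : ∀ k : ℕ, ∑ i, (s i * w i) * wvec m n k i = 0 := by
    intro k
    induction k with
    | zero =>
      rw [wvec_zero]
      simpa using hzero
    | succ k ih =>
      have h0 : ∀ i, wvec m n (k + 1) i = (Pmat m n *ᵥ wvec m n k) i + genFib m (k + 1) ^ n := by
        intro i
        rw [Pmat_mulVec_wvec m n hn k]
        ring
      have h2 : ∑ i, (s i * w i) * (Pmat m n *ᵥ wvec m n k) i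
          = μ * ∑ i, (s i * w i) * wvec m n k i := by
        have inner : ∀ j : Fin (n - 1), ∑ i, (s i * w i) * (Pmat m n i j * wvec m n k j)
            = μ * ((s j * w j) * wvec m n k j) := by
          intro j
          have hPwj : ∑ i, Pmat m n j i * w i = μ * w j := by
            have h3 := congrFun hPw j
            simpa [Matrix.mulVec, dotProduct] using h3
          calc ∑ i, (s i * w i) * (Pmat m n i j * wvec m n k j)
              = ∑ i, ((s i * Pmat m n i j) * w i) * wvec m n k j := by
                apply Finset.sum_congr rfl; intro i _; ring
            _ = ∑ i, ((s j * Pmat m n j i) * w i) * wvec m n k j := by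
                apply Finset.sum_congr rfl; intro i _; rw [hsym i j]
            _ = (s j * ∑ i, Pmat m n j i * w i) * wvec m n k j := by
                rw [Finset.mul_sum, Finset.sum_mul]
                apply Finset.sum_congr rfl; intro i _; ring
            _ = μ * ((s j * w j) * wvec m n k j) := by rw [hPwj]; ring
        calc ∑ i, (s i * w i) * (Pmat m n *ᵥ wvec m n k) i
            = ∑ i, ∑ j, (s i * w i) * (Pmat m n i j * wvec m n k j) := by
              apply Finset.sum_congr rfl; intro i _
              rw [Matrix.mulVec, dotProduct, Finset.mul_sum]
          _ = ∑ j, ∑ i, (s i * w i) * (Pmat m n i j * wvec m n k j) := Finset.sum_comm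
          _ = ∑ j, μ * ((s j * w j) * wvec m n k j) := Finset.sum_congr rfl fun j _ => inner j
          _ = μ * ∑ j, (s j * w j) * wvec m n k j := by rw [Finset.mul_sum]
      calc ∑ i, (s i * w i) * wvec m n (k + 1) i
          = ∑ i, ((s i * w i) * (Pmat m n *ᵥ wvec m n k) i
              + genFib m (k + 1) ^ n * (s i * w i)) := by
            apply Finset.sum_congr rfl; intro i _; rw [h0 i]; ring
        _ = ∑ i, (s i * w i) * (Pmat m n *ᵥ wvec m n k) i
              + genFib m (k + 1) ^ n * ∑ i, s i * w i := by
            rw [Finset.sum_add_distrib, Finset.mul_sum]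
        _ = 0 := by rw [h2, ih, hzero, mul_zero, mul_zero, add_zero]
  have hWx : Wmat m n *ᵥ (fun i => s i * w i) = 0 := by
    funext k
    show ∑ i, Wmat m n k i * (s i * w i) = 0
    calc ∑ i, Wmat m n k i * (s i * w i)
        = ∑ i, (s i * w i) * wvec m n (k : ℕ) i :=
          Finset.sum_congr rfl fun i _ => mul_comm _ _
      _ = 0 := key (k : ℕ)
  have hx0 := Wmat_mulVec_eq_zero hm hn hWx
  apply hw
  funext i
  have := congrFun hx0 i
  simp only [Pi.zero_apply] at this
  have hsi := hs i
  have : w i = 0 := by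
    rcases mul_eq_zero.mp this with h | h
    · exact absurd h (ne_of_gt hsi)
    · exact h
  simp [this]

/-! ### `Pmat` is nonsingular -/

lemma det_Pmat_ne_zero {m n : ℕ} (hm : 2 ≤ m) (hn : 2 ≤ n) : (Pmat m n).det ≠ 0 := by
  have hperm := Matrix.det_permute (Fin.revPerm : Equiv.Perm (Fin (n - 1))) (Pmat m n)
  have htri : ((Pmat m n).submatrix (Fin.revPerm : Equiv.Perm (Fin (n - 1))) id).BlockTriangular id := by
    intro i j hij
    have hi := i.isLt
    have hj := j.isLt
    have hij' : (j : ℕ) < (i : ℕ) := hij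
    show Pmat m n (Fin.rev i) j = 0
    have hrv : ((Fin.rev i : Fin (n - 1)) : ℕ) = (n - 1) - ((i : ℕ) + 1) := rfl
    show (if n ≤ (((Fin.rev i : Fin (n - 1)) : ℕ) + 1) + ((j : ℕ) + 1) then
      ((((Fin.rev i : Fin (n - 1)) : ℕ) + 1).choose (n - ((j : ℕ) + 1)) : ℝ)
        * ((m : ℝ) - 1) ^ (n - ((j : ℕ) + 1)) else 0) = 0
    rw [if_neg (by rw [hrv]; omega)]
  have hdiag : ∀ i : Fin (n - 1),
      (Pmat m n).submatrix (Fin.revPerm : Equiv.Perm (Fin (n - 1))) id i i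
        = ((m : ℝ) - 1) ^ (n - 1 - (i : ℕ)) := by
    intro i
    have hi := i.isLt
    have hrv : ((Fin.rev i : Fin (n - 1)) : ℕ) = (n - 1) - ((i : ℕ) + 1) := rfl
    show (if n ≤ (((Fin.rev i : Fin (n - 1)) : ℕ) + 1) + ((i : ℕ) + 1) then
      ((((Fin.rev i : Fin (n - 1)) : ℕ) + 1).choose (n - ((i : ℕ) + 1)) : ℝ)
        * ((m : ℝ) - 1) ^ (n - ((i : ℕ) + 1)) else 0) = _
    rw [if_pos (by rw [hrv]; omega), hrv]
    rw [show (n - 1) - ((i : ℕ) + 1) + 1 = n - ((i : ℕ) + 1) from by omega, Nat.choose_self]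
    rw [show n - ((i : ℕ) + 1) = n - 1 - (i : ℕ) from by omega]
    simp
  have hm1 : ((m : ℝ) - 1) ≠ 0 := by
    have : (2 : ℝ) ≤ (m : ℝ) := by exact_mod_cast hm
    linarith
  have hprod : ((Pmat m n).submatrix (Fin.revPerm : Equiv.Perm (Fin (n - 1))) id).det ≠ 0 := by
    rw [Matrix.det_of_upperTriangular htri]
    rw [Finset.prod_ne_zero_iff]
    intro i _
    rw [hdiag i]
    exact pow_ne_zero _ hm1
  intro h0
  rw [hperm, h0, mul_zero] at hprod
  exact hprod rfl

/-! ### Eigenvalues via determinants -/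

lemma eig_iff_det {r : ℕ} (M : Matrix (Fin r) (Fin r) ℝ) (μ : ℝ) :
    (∃ v : Fin r → ℝ, v ≠ 0 ∧ M *ᵥ v = μ • v) ↔ (M - μ • 1).det = 0 := by
  rw [← Matrix.exists_mulVec_eq_zero_iff]
  constructor
  · rintro ⟨v, hv, hMv⟩
    refine ⟨v, hv, ?_⟩
    rw [Matrix.sub_mulVec, hMv, Matrix.smul_mulVec, Matrix.one_mulVec, sub_self]
  · rintro ⟨v, hv, hMv⟩
    refine ⟨v, hv, ?_⟩
    rw [Matrix.sub_mulVec, Matrix.smul_mulVec, Matrix.one_mulVec, sub_eq_zero] at hMv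
    exact hMv

lemma eig_transpose {r : ℕ} {M : Matrix (Fin r) (Fin r) ℝ} {μ : ℝ}
    (h : ∃ v : Fin r → ℝ, v ≠ 0 ∧ Mᵀ *ᵥ v = μ • v) :
    ∃ v : Fin r → ℝ, v ≠ 0 ∧ M *ᵥ v = μ • v := by
  rw [eig_iff_det] at h ⊢
  rw [← Matrix.det_transpose, Matrix.transpose_sub, Matrix.transpose_smul,
    Matrix.transpose_one] at h
  exact h

/-! ### Graph-side combinatorics -/

section Graph

variable (F : Type) [Field F] [Fintype F] (n : ℕ)

/-- The support of a vector. -/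
noncomputable def supp (x : Fin n → F) : Finset (Fin n) :=
  Finset.univ.filter (fun i => x i ≠ 0)

lemma mem_supp {x : Fin n → F} {i : Fin n} : i ∈ supp F n x ↔ x i ≠ 0 := by
  simp [supp]

lemma supp_card_pos (x : zdVertex F n) : 1 ≤ (supp F n x.1).card := by
  obtain ⟨i, hi⟩ := Function.ne_iff.mp x.2.1
  refine Finset.card_pos.mpr ⟨i, ?_⟩
  exact (mem_supp F n).mpr (by simpa using hi)

lemma supp_card_le (x : zdVertex F n) : (supp F n x.1).card ≤ n - 1 := by
  obtain ⟨y, hy0, hxy⟩ := x.2.2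
  obtain ⟨i, hi⟩ := Function.ne_iff.mp hy0
  have hyi : y i ≠ 0 := by simpa using hi
  have hxi : x.1 i = 0 := by
    have := congrFun hxy i
    simp only [Pi.mul_apply, Pi.zero_apply] at this
    rcases mul_eq_zero.mp this with h | h
    · exact h
    · exact absurd h hyi
  have hsub : supp F n x.1 ⊆ Finset.univ.erase i := by
    intro a ha
    refine Finset.mem_erase.mpr ⟨?_, Finset.mem_univ a⟩
    intro h
    exact ((mem_supp F n).mp ha) (h ▸ hxi)
  have := Finset.card_le_card hsub
  rwa [Finset.card_erase_of_mem (Finset.mem_univ i), Finset.card_univ, Fintype.card_fin] at this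

/-- Class of a vertex: `n - 1 - |supp x|`, so class `j` means `|supp x| = n - 1 - j`. -/
noncomputable def cls (hn : 2 ≤ n) (x : zdVertex F n) : Fin (n - 1) :=
  ⟨n - 1 - (supp F n x.1).card, by
    have h1 := supp_card_pos F n x
    omega⟩

lemma cls_eq_iff (hn : 2 ≤ n) (x : zdVertex F n) (j : Fin (n - 1)) :
    cls F n hn x = j ↔ (supp F n x.1).card = n - 1 - (j : ℕ) := by
  have h1 := supp_card_pos F n x
  have h2 := supp_card_le F n x
  have h3 := j.isLt
  rw [Fin.ext_iff]
  show n - 1 - (supp F n x.1).card = (j : ℕ) ↔ _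
  omega

lemma card_supp_fixed (T : Finset (Fin n)) :
    (Finset.univ.filter fun y : Fin n → F => supp F n y = T).card
      = (Fintype.card F - 1) ^ T.card := by
  rw [← Fintype.card_subtype]
  have e : {y : Fin n → F // supp F n y = T} ≃ ((i : T) → {a : F // a ≠ 0}) :=
    { toFun := fun y i => ⟨y.1 i.1, by
        have h := y.2
        have hmem : (i : Fin n) ∈ supp F n y.1 := by rw [h]; exact i.2
        exact (mem_supp F n).mp hmem⟩
      invFun := fun g => ⟨fun i => if h : i ∈ T then (g ⟨i, h⟩).1 else 0, by
        ext i
        rw [mem_supp F n]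
        constructor
        · intro hi
          by_contra hiT
          rw [dif_neg hiT] at hi
          exact hi rfl
        · intro hi
          rw [dif_pos hi]
          exact (g ⟨i, hi⟩).2⟩
      left_inv := by
        intro y
        apply Subtype.ext
        funext i
        show (if h : i ∈ T then (y.1 i) else 0) = y.1 i
        by_cases h : i ∈ T
        · rw [dif_pos h]
        · rw [dif_neg h]
          by_contra hne
          have hmem : i ∈ supp F n y.1 := (mem_supp F n).mpr fun h0 => hne h0.symm
          rw [y.2] at hmem
          exact h hmem
      right_inv := by
        intro g
        funext i
        apply Subtype.ext
        show (if h : (i : Fin n) ∈ T then (g ⟨i, h⟩).1 else 0) = (g i).1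
        rw [dif_pos i.2] }
  rw [Fintype.card_congr e, Fintype.card_pi]
  have hcard : Fintype.card {a : F // a ≠ 0} = Fintype.card F - 1 := by
    have := Fintype.card_subtype_compl (fun a : F => a = 0)
    have h1 : Fintype.card {a : F // a = 0} = 1 := Fintype.card_subtype_eq (0 : F)
    rw [h1] at this
    convert this using 2
  rw [Finset.prod_congr rfl (fun i _ => hcard)]
  rw [Finset.prod_const, Finset.card_univ, Fintype.card_coe]

lemma card_funs (Z : Finset (Fin n)) (kk : ℕ) :
    (Finset.univ.filter fun y : Fin n → F =>
        supp F n y ⊆ Z ∧ (supp F n y).card = kk).card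
      = Z.card.choose kk * (Fintype.card F - 1) ^ kk := by
  rw [Finset.card_eq_sum_card_fiberwise
      (f := fun y : Fin n → F => supp F n y) (t := Z.powersetCard kk)
      (fun y hy => by
        rw [Finset.mem_coe, Finset.mem_filter] at hy
        exact Finset.mem_powersetCard.mpr ⟨hy.2.1, hy.2.2⟩)]
  have hfib : ∀ T ∈ Z.powersetCard kk,
      ((Finset.univ.filter fun y : Fin n → F =>
          supp F n y ⊆ Z ∧ (supp F n y).card = kk).filter
        (fun y => supp F n y = T)).card = (Fintype.card F - 1) ^ kk := by
    intro T hT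
    rw [Finset.mem_powersetCard] at hT
    have heq : ((Finset.univ.filter fun y : Fin n → F =>
          supp F n y ⊆ Z ∧ (supp F n y).card = kk).filter
        (fun y => supp F n y = T)) = Finset.univ.filter (fun y => supp F n y = T) := by
      ext y
      simp only [Finset.mem_filter, Finset.mem_univ, true_and]
      constructor
      · rintro ⟨_, h⟩
        exact h
      · intro h
        exact ⟨⟨h ▸ hT.1, h ▸ hT.2⟩, h⟩
    rw [heq, card_supp_fixed, hT.2]
  rw [Finset.sum_congr rfl hfib, Finset.sum_const, Finset.card_powersetCard, smul_eq_mul]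

/-- The natural-number version of the entries of `Pmat`. -/
def Pnat (q n : ℕ) (i j : Fin (n - 1)) : ℕ :=
  ((i : ℕ) + 1).choose (n - 1 - (j : ℕ)) * (q - 1) ^ (n - 1 - (j : ℕ))

lemma Pmat_eq_Pnat {m n : ℕ} (hm : 2 ≤ m) (i j : Fin (n - 1)) :
    Pmat m n i j = (Pnat m n i j : ℝ) := by
  have hj := j.isLt
  have hi := i.isLt
  have h1 : n - ((j : ℕ) + 1) = n - 1 - (j : ℕ) := by omega
  have hcast : ((m : ℝ) - 1) = ((m - 1 : ℕ) : ℝ) := by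
    have : (1 : ℕ) ≤ m := by omega
    push_cast [Nat.cast_sub this]
    ring
  show (if n ≤ ((i : ℕ) + 1) + ((j : ℕ) + 1) then
      (((i : ℕ) + 1).choose (n - ((j : ℕ) + 1)) : ℝ) * ((m : ℝ) - 1) ^ (n - ((j : ℕ) + 1))
    else 0) = _
  by_cases hc : n ≤ ((i : ℕ) + 1) + ((j : ℕ) + 1)
  · rw [if_pos hc, h1, Pnat, hcast]
    push_cast
    ring
  · rw [if_neg hc, Pnat]
    have : (i : ℕ) + 1 < n - 1 - (j : ℕ) := by omega
    rw [Nat.choose_eq_zero_of_lt this]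
    simp

lemma neighbor_count (hn : 2 ≤ n) (x : zdVertex F n) (j : Fin (n - 1)) :
    (Finset.univ.filter fun y : zdVertex F n =>
        (zdGraph F n).Adj x y ∧ cls F n hn y = j).card
      = Pnat (Fintype.card F) n (cls F n hn x) j := by
  set Z : Finset (Fin n) := Finset.univ \ supp F n x.1 with hZ
  have hZcard : Z.card = ((cls F n hn x : ℕ)) + 1 := by
    rw [hZ, Finset.card_sdiff_of_subset (Finset.subset_univ _), Finset.card_univ, Fintype.card_fin]
    have h1 := supp_card_pos F n x
    have h2 := supp_card_le F n x
    show n - (supp F n x.1).card = (n - 1 - (supp F n x.1).card) + 1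
    omega
  have hbij : (Finset.univ.filter fun y : zdVertex F n =>
        (zdGraph F n).Adj x y ∧ cls F n hn y = j).card
      = (Finset.univ.filter fun y : Fin n → F =>
          supp F n y ⊆ Z ∧ (supp F n y).card = n - 1 - (j : ℕ)).card := by
    apply Finset.card_bij (fun y _ => y.1)
    · intro y hy
      rw [Finset.mem_filter] at hy
      obtain ⟨-, hadj, hcls⟩ := hy
      rw [Finset.mem_filter]
      refine ⟨Finset.mem_univ _, ?_, (cls_eq_iff F n hn y j).mp hcls⟩
      intro i hi
      rw [hZ, Finset.mem_sdiff]
      refine ⟨Finset.mem_univ _, ?_⟩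
      intro hix
      have hmul := congrFun hadj.2 i
      simp only [Pi.mul_apply, Pi.zero_apply] at hmul
      rcases mul_eq_zero.mp hmul with h | h
      · exact ((mem_supp F n).mp hix) h
      · exact ((mem_supp F n).mp hi) h
    · intro y₁ h₁ y₂ h₂ h
      exact Subtype.ext h
    · intro y hy
      rw [Finset.mem_filter] at hy
      obtain ⟨-, hsub, hcard⟩ := hy
      have hj := j.isLt
      have hy0 : y ≠ 0 := by
        have : 0 < (supp F n y).card := by omega
        obtain ⟨i, hi⟩ := Finset.card_pos.mp this
        intro h0
        exact ((mem_supp F n).mp hi) (by rw [h0]; rfl)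
      have hxy0 : ∀ i, y i ≠ 0 → x.1 i = 0 := by
        intro i hi
        have := hsub ((mem_supp F n).mpr hi)
        rw [hZ, Finset.mem_sdiff] at this
        by_contra hx
        exact this.2 ((mem_supp F n).mpr hx)
      have hyx : y * x.1 = 0 := by
        funext i
        simp only [Pi.mul_apply, Pi.zero_apply]
        by_cases h : y i = 0
        · rw [h, zero_mul]
        · rw [hxy0 i h, mul_zero]
      refine ⟨⟨y, hy0, ⟨x.1, x.2.1, hyx⟩⟩, ?_, rfl⟩
      rw [Finset.mem_filter]
      refine ⟨Finset.mem_univ _, ⟨?_, ?_⟩, ?_⟩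
      · -- x ≠ ⟨y, _⟩
        intro heq
        obtain ⟨i, hi⟩ := Finset.card_pos.mp (show 0 < (supp F n x.1).card from supp_card_pos F n x)
        have hyi : y i ≠ 0 := by
          have hx1 : x.1 = y := congrArg Subtype.val heq
          have hne : x.1 i ≠ 0 := (mem_supp F n).mp hi
          rwa [hx1] at hne
        have := hsub ((mem_supp F n).mpr hyi)
        rw [hZ, Finset.mem_sdiff] at this
        exact this.2 hi
      · -- x.1 * y = 0
        funext i
        simp only [Pi.mul_apply, Pi.zero_apply]
        by_cases h : y i = 0
        · rw [h, mul_zero]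
        · rw [hxy0 i h, zero_mul]
      · exact (cls_eq_iff F n hn _ j).mpr hcard
  rw [hbij, card_funs, hZcard]
  rfl

lemma class_nonempty (hn : 2 ≤ n) (j : Fin (n - 1)) :
    ∃ x : zdVertex F n, cls F n hn x = j := by
  have hj := j.isLt
  set kk : ℕ := n - 1 - (j : ℕ) with hkk
  have hkk1 : 1 ≤ kk := by omega
  have hkkn : kk ≤ n - 1 := by omega
  set x : Fin n → F := fun i => if (i : ℕ) < kk then 1 else 0 with hx
  have hsupp : supp F n x = Finset.univ.filter (fun i : Fin n => (i : ℕ) < kk) := by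
    ext i
    rw [mem_supp, Finset.mem_filter]
    rw [hx]
    by_cases h : (i : ℕ) < kk
    · simp [h]
    · simp [h]
  have hcard : (supp F n x).card = kk := by
    rw [hsupp]
    have : Finset.univ.filter (fun i : Fin n => (i : ℕ) < kk)
        = Finset.map (Fin.castLEEmb (show kk ≤ n by omega)) Finset.univ := by
      ext i
      constructor
      · intro h
        rw [Finset.mem_filter] at h
        rw [Finset.mem_map]
        exact ⟨⟨(i : ℕ), h.2⟩, Finset.mem_univ _, by ext; simp [Fin.castLEEmb]⟩
      · intro h
        rw [Finset.mem_map] at h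
        obtain ⟨a, -, rfl⟩ := h
        rw [Finset.mem_filter]
        exact ⟨Finset.mem_univ _, by simpa [Fin.castLEEmb] using a.isLt⟩
    rw [this, Finset.card_map, Finset.card_univ, Fintype.card_fin]
  have hx0 : x ≠ 0 := by
    intro h0
    have : x ⟨0, by omega⟩ = 0 := by rw [h0]; rfl
    rw [hx] at this
    simp only [show ((⟨0, by omega⟩ : Fin n) : ℕ) < kk by show 0 < kk; omega, if_true] at this
    exact one_ne_zero this
  set y : Fin n → F := fun i => if (i : ℕ) < kk then 0 else 1 with hy
  have hy0 : y ≠ 0 := by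
    intro h0
    have : y ⟨kk, by omega⟩ = 0 := by rw [h0]; rfl
    rw [hy] at this
    simp at this
  have hxy : x * y = 0 := by
    funext i
    simp only [Pi.mul_apply, Pi.zero_apply, hx, hy]
    by_cases h : (i : ℕ) < kk
    · simp [h]
    · simp [h]
  refine ⟨⟨x, hx0, y, hy0, hxy⟩, ?_⟩
  rw [cls_eq_iff]
  rw [hcard]

end Graph

section Graph2

variable (F : Type) [Field F] [Fintype F] (n : ℕ)

lemma Esymm (hn : 2 ≤ n) (i j : Fin (n - 1)) :
    (Finset.univ.filter fun p : zdVertex F n × zdVertex F n =>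
        (zdGraph F n).Adj p.1 p.2 ∧ cls F n hn p.1 = i ∧ cls F n hn p.2 = j).card
      = (Finset.univ.filter fun p : zdVertex F n × zdVertex F n =>
        (zdGraph F n).Adj p.1 p.2 ∧ cls F n hn p.1 = j ∧ cls F n hn p.2 = i).card := by
  apply Finset.card_bij (fun p _ => (p.2, p.1))
  · intro p hp
    rw [Finset.mem_filter] at hp ⊢
    exact ⟨Finset.mem_univ _, hp.2.1.symm, hp.2.2.2, hp.2.2.1⟩
  · intro p hp q hq h
    have h1 : p.2 = q.2 := congrArg Prod.fst h
    have h2 : p.1 = q.1 := congrArg Prod.snd h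
    exact Prod.ext h2 h1
  · intro p hp
    refine ⟨(p.2, p.1), ?_, rfl⟩
    rw [Finset.mem_filter] at hp ⊢
    exact ⟨Finset.mem_univ _, hp.2.1.symm, hp.2.2.2, hp.2.2.1⟩

lemma Ecount (hn : 2 ≤ n) (i j : Fin (n - 1)) :
    (Finset.univ.filter fun p : zdVertex F n × zdVertex F n =>
        (zdGraph F n).Adj p.1 p.2 ∧ cls F n hn p.1 = i ∧ cls F n hn p.2 = j).card
      = (Finset.univ.filter fun x : zdVertex F n => cls F n hn x = i).card
          * Pnat (Fintype.card F) n i j := by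
  rw [Finset.card_eq_sum_card_fiberwise
      (f := Prod.fst) (t := Finset.univ.filter fun x : zdVertex F n => cls F n hn x = i)
      (fun p hp => by
        rw [Finset.mem_coe, Finset.mem_filter] at hp ⊢
        exact ⟨Finset.mem_univ _, hp.2.2.1⟩)]
  apply Finset.sum_const_nat
  intro x hx
  rw [Finset.mem_filter] at hx
  have hfiber : ((Finset.univ.filter fun p : zdVertex F n × zdVertex F n =>
        (zdGraph F n).Adj p.1 p.2 ∧ cls F n hn p.1 = i ∧ cls F n hn p.2 = j).filter
          fun p => p.1 = x).card
      = (Finset.univ.filter fun y : zdVertex F n =>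
          (zdGraph F n).Adj x y ∧ cls F n hn y = j).card := by
    apply Finset.card_bij (fun p _ => p.2)
    · intro p hp
      simp only [Finset.mem_filter] at hp ⊢
      obtain ⟨⟨-, hadj, _, hc2⟩, hfst⟩ := hp
      exact ⟨Finset.mem_univ _, hfst ▸ hadj, hc2⟩
    · intro p hp q hq h
      simp only [Finset.mem_filter] at hp hq
      exact Prod.ext (hp.2.trans hq.2.symm) h
    · intro y hy
      simp only [Finset.mem_filter] at hy ⊢
      exact ⟨(x, y), ⟨⟨Finset.mem_univ _, hy.2.1, hx.2, hy.2.2⟩, rfl⟩, rfl⟩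
  rw [hfiber, neighbor_count F n hn x j, hx.2]

lemma class_symm (hn : 2 ≤ n) (i j : Fin (n - 1)) :
    (Finset.univ.filter fun x : zdVertex F n => cls F n hn x = i).card
        * Pnat (Fintype.card F) n i j
      = (Finset.univ.filter fun x : zdVertex F n => cls F n hn x = j).card
        * Pnat (Fintype.card F) n j i := by
  rw [← Ecount F n hn i j, ← Ecount F n hn j i, Esymm F n hn i j]

lemma lift_mulVec (hn : 2 ≤ n) (w : Fin (n - 1) → ℝ) (x : zdVertex F n) :
    ((zdGraph F n).adjMatrix ℝ *ᵥ fun y => w (cls F n hn y)) x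
      = ∑ j, (Pnat (Fintype.card F) n (cls F n hn x) j : ℝ) * w j := by
  rw [SimpleGraph.adjMatrix_mulVec_apply]
  rw [← Finset.sum_fiberwise' ((zdGraph F n).neighborFinset x) (fun y => cls F n hn y) w]
  apply Finset.sum_congr rfl
  intro j _
  rw [Finset.sum_const]
  have hset : ((zdGraph F n).neighborFinset x).filter (fun y => cls F n hn y = j)
      = Finset.univ.filter fun y : zdVertex F n =>
          (zdGraph F n).Adj x y ∧ cls F n hn y = j := by
    ext y
    simp only [Finset.mem_filter, SimpleGraph.mem_neighborFinset, Finset.mem_univ, true_and]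
  rw [hset, neighbor_count F n hn x j, nsmul_eq_mul]

lemma sum_class_mulVec (hn : 2 ≤ n) (v : zdVertex F n → ℝ) (j : Fin (n - 1)) :
    ∑ x ∈ Finset.univ.filter (fun x : zdVertex F n => cls F n hn x = j),
        ((zdGraph F n).adjMatrix ℝ *ᵥ v) x
      = ∑ i, (Pnat (Fintype.card F) n i j : ℝ)
          * ∑ x ∈ Finset.univ.filter (fun x : zdVertex F n => cls F n hn x = i), v x := by
  calc ∑ x ∈ Finset.univ.filter (fun x : zdVertex F n => cls F n hn x = j),
        ((zdGraph F n).adjMatrix ℝ *ᵥ v) x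
      = ∑ x ∈ Finset.univ.filter (fun x : zdVertex F n => cls F n hn x = j),
          ∑ y, ((zdGraph F n).adjMatrix ℝ) x y * v y := rfl
    _ = ∑ y, ∑ x ∈ Finset.univ.filter (fun x : zdVertex F n => cls F n hn x = j),
          ((zdGraph F n).adjMatrix ℝ) x y * v y := Finset.sum_comm
    _ = ∑ y : zdVertex F n, (Pnat (Fintype.card F) n (cls F n hn y) j : ℝ) * v y := by
        apply Finset.sum_congr rfl
        intro y _
        rw [← Finset.sum_mul]
        congr 1
        have h1 : ∑ x ∈ Finset.univ.filter (fun x : zdVertex F n => cls F n hn x = j),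
            ((zdGraph F n).adjMatrix ℝ) x y
            = ((Finset.univ.filter (fun x : zdVertex F n => cls F n hn x = j)).filter
                (fun x => (zdGraph F n).Adj x y)).card := by
          rw [← Finset.sum_boole]
          apply Finset.sum_congr rfl
          intro x _
          rw [SimpleGraph.adjMatrix_apply]
        rw [h1]
        have h2 : (Finset.univ.filter (fun x : zdVertex F n => cls F n hn x = j)).filter
                (fun x => (zdGraph F n).Adj x y)
            = Finset.univ.filter fun z : zdVertex F n =>
                (zdGraph F n).Adj y z ∧ cls F n hn z = j := by
          ext z
          simp only [Finset.mem_filter, Finset.mem_univ, true_and]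
          constructor
          · rintro ⟨h3, h4⟩
            exact ⟨h4.symm, h3⟩
          · rintro ⟨h3, h4⟩
            exact ⟨h4, h3.symm⟩
        rw [h2, neighbor_count F n hn y j]
    _ = ∑ i, ∑ y ∈ Finset.univ.filter (fun y : zdVertex F n => cls F n hn y = i),
          (Pnat (Fintype.card F) n (cls F n hn y) j : ℝ) * v y :=
        (Finset.sum_fiberwise Finset.univ (cls F n hn)
          (fun y => (Pnat (Fintype.card F) n (cls F n hn y) j : ℝ) * v y)).symm
    _ = ∑ i, (Pnat (Fintype.card F) n i j : ℝ)
          * ∑ x ∈ Finset.univ.filter (fun x : zdVertex F n => cls F n hn x = i), v x := by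
        apply Finset.sum_congr rfl
        intro i _
        rw [Finset.mul_sum]
        apply Finset.sum_congr rfl
        intro y hy
        rw [Finset.mem_filter] at hy
        rw [hy.2]

end Graph2

end ZDAux

/-- The main eigenvalues of `Γ(R_n)` are precisely the eigenvalues of `P[m,n]`; moreover `0` is
not an eigenvalue of `P[m,n]`, so every main eigenvalue of `Γ(R_n)` is nonzero. -/
theorem zdGraph_mainEigs_eq_Pmat_eigs (F : Type) [Field F] [Fintype F] (m n : ℕ)
    (hm : Fintype.card F = m) (hn : 2 ≤ n) :
    mainEigs (zdGraph F n)
        = {μ : ℝ | ∃ v : Fin (n - 1) → ℝ, v ≠ 0 ∧ Pmat m n *ᵥ v = μ • v} ∧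
    (¬ ∃ v : Fin (n - 1) → ℝ, v ≠ 0 ∧ Pmat m n *ᵥ v = (0 : ℝ) • v) ∧
    ∀ μ ∈ mainEigs (zdGraph F n), μ ≠ 0 := by
  subst hm
  have hm2 : 2 ≤ Fintype.card F := Fintype.one_lt_card
  set s : Fin (n - 1) → ℝ := fun j =>
    ((Finset.univ.filter (fun x : zdVertex F n => ZDAux.cls F n hn x = j)).card : ℝ) with hs
  have hspos : ∀ j, 0 < s j := by
    intro j
    obtain ⟨x0, hx0⟩ := ZDAux.class_nonempty F n hn j
    simp only [hs]
    have : x0 ∈ Finset.univ.filter (fun x : zdVertex F n => ZDAux.cls F n hn x = j) :=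
      Finset.mem_filter.mpr ⟨Finset.mem_univ _, hx0⟩
    have hpos : 0 < (Finset.univ.filter
        (fun x : zdVertex F n => ZDAux.cls F n hn x = j)).card :=
      Finset.card_pos.mpr ⟨x0, this⟩
    exact_mod_cast hpos
  have hsym : ∀ i j, s i * Pmat (Fintype.card F) n i j = s j * Pmat (Fintype.card F) n j i := by
    intro i j
    simp only [hs]
    rw [ZDAux.Pmat_eq_Pnat hm2, ZDAux.Pmat_eq_Pnat hm2]
    exact_mod_cast ZDAux.class_symm F n hn i j
  have h1 : mainEigs (zdGraph F n)
      = {μ : ℝ | ∃ v : Fin (n - 1) → ℝ, v ≠ 0 ∧ Pmat (Fintype.card F) n *ᵥ v = μ • v} := by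
    ext μ
    simp only [mainEigs, Set.mem_setOf_eq]
    constructor
    · rintro ⟨v, hv0, hAv, hsum⟩
      refine ZDAux.eig_transpose ?_
      refine ⟨(fun i => ∑ x ∈ Finset.univ.filter
          (fun x : zdVertex F n => ZDAux.cls F n hn x = i), v x), ?_, ?_⟩
      · intro h0
        apply hsum
        have husum : ∑ i, (fun i => ∑ x ∈ Finset.univ.filter
            (fun x : zdVertex F n => ZDAux.cls F n hn x = i), v x) i = ∑ x, v x :=
          Finset.sum_fiberwise Finset.univ (ZDAux.cls F n hn) v
        rw [← husum, h0]
        simp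
      · funext j
        have lhs : ((Pmat (Fintype.card F) n)ᵀ *ᵥ fun i => ∑ x ∈ Finset.univ.filter
            (fun x : zdVertex F n => ZDAux.cls F n hn x = i), v x) j
            = ∑ i, Pmat (Fintype.card F) n i j * ∑ x ∈ Finset.univ.filter
                (fun x : zdVertex F n => ZDAux.cls F n hn x = i), v x := by
          simp [Matrix.mulVec, dotProduct, Matrix.transpose_apply]
        have key := ZDAux.sum_class_mulVec F n hn v j
        rw [hAv] at key
        have hL : ∑ x ∈ Finset.univ.filter
            (fun x : zdVertex F n => ZDAux.cls F n hn x = j), (μ • v) x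
            = μ * ∑ x ∈ Finset.univ.filter
                (fun x : zdVertex F n => ZDAux.cls F n hn x = j), v x := by
          simp only [Pi.smul_apply, smul_eq_mul]
          rw [Finset.mul_sum]
        rw [hL] at key
        rw [lhs]
        have hR : ∑ i, Pmat (Fintype.card F) n i j * ∑ x ∈ Finset.univ.filter
            (fun x : zdVertex F n => ZDAux.cls F n hn x = i), v x
            = ∑ i, (ZDAux.Pnat (Fintype.card F) n i j : ℝ) * ∑ x ∈ Finset.univ.filter
                (fun x : zdVertex F n => ZDAux.cls F n hn x = i), v x := by
          apply Finset.sum_congr rfl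
          intro i _
          rw [ZDAux.Pmat_eq_Pnat hm2]
        rw [hR, ← key]
        rfl
    · rintro ⟨w, hw0, hPw⟩
      refine ⟨fun x => w (ZDAux.cls F n hn x), ?_, ?_, ?_⟩
      · obtain ⟨i, hi⟩ := Function.ne_iff.mp hw0
        obtain ⟨x0, hx0⟩ := ZDAux.class_nonempty F n hn i
        intro h0
        apply hi
        simpa [hx0] using congrFun h0 x0
      · funext x
        rw [ZDAux.lift_mulVec F n hn w x]
        have hR : ∑ j, (ZDAux.Pnat (Fintype.card F) n (ZDAux.cls F n hn x) j : ℝ) * w j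
            = ∑ j, Pmat (Fintype.card F) n (ZDAux.cls F n hn x) j * w j := by
          apply Finset.sum_congr rfl
          intro j _
          rw [ZDAux.Pmat_eq_Pnat hm2]
        rw [hR]
        have : (Pmat (Fintype.card F) n *ᵥ w) (ZDAux.cls F n hn x)
            = μ * w (ZDAux.cls F n hn x) := by
          rw [hPw]
          rfl
        exact this
      · have hfib : ∑ x : zdVertex F n, w (ZDAux.cls F n hn x) = ∑ j, s j * w j := by
          rw [← Finset.sum_fiberwise Finset.univ (ZDAux.cls F n hn)
            (fun x => w (ZDAux.cls F n hn x))]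
          apply Finset.sum_congr rfl
          intro j _
          have e1 : ∑ x ∈ (Finset.univ.filter
                (fun x : zdVertex F n => ZDAux.cls F n hn x = j)), w (ZDAux.cls F n hn x)
              = ∑ x ∈ (Finset.univ.filter
                (fun x : zdVertex F n => ZDAux.cls F n hn x = j)), w j := by
            apply Finset.sum_congr rfl
            intro x hx
            rw [(Finset.mem_filter.mp hx).2]
          rw [e1, Finset.sum_const, nsmul_eq_mul]
        show ∑ x : zdVertex F n, w (ZDAux.cls F n hn x) ≠ 0
        rw [hfib]
        exact ZDAux.eig_inner_ne_zero hm2 hn hspos hsym hw0 hPw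
  have h2 : ¬ ∃ v : Fin (n - 1) → ℝ, v ≠ 0 ∧ Pmat (Fintype.card F) n *ᵥ v = (0 : ℝ) • v := by
    rintro ⟨v, hv, hPv⟩
    have hdet := (ZDAux.eig_iff_det (Pmat (Fintype.card F) n) 0).mp ⟨v, hv, hPv⟩
    rw [zero_smul, sub_zero] at hdet
    exact ZDAux.det_Pmat_ne_zero hm2 hn hdet
  refine ⟨h1, h2, ?_⟩
  intro μ hμ h0
  subst h0
  rw [h1] at hμ
  exact h2 hμ
end

section
/- Let m ≥ 2 and n ≥ 2 be integers, and set γ_k = F_{m,k+1}/F_{m,k} and C_k = (m−1)^k·F_{m,k}^{n−2}. Then det W(Q[m,n]) = (∏_{0 ≤ r < l ≤ n−2} (γ_l − γ_r)) · (∏_{k=0}^{n−2} C_k). -/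
attribute [local instance] Classical.propDecidable

open Matrix

lemma Qmat_eq (m n : ℕ) (hn : 2 ≤ n) (i j : Fin (n-1)) :
    Qmat m n i j = (Nat.choose i.val (n - 2 - j.val) : ℝ) * ((m:ℝ)-1) ^ (n - 2 - j.val + 1) := by
  have hj := j.isLt
  have hi := i.isLt
  unfold Qmat
  split_ifs with h
  · rw [show n - (j.val+1) - 1 = n-2-j.val from by omega,
      show n - (j.val+1) = n-2-j.val+1 from by omega]
  · have hlt : i.val < n - 2 - j.val := by omega
    rw [Nat.choose_eq_zero_of_lt hlt]
    simp

lemma genFib_succ_succ (m : ℕ) (k : ℕ) :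
    genFib m (k+2) = ((m:ℝ)-1) * genFib m k + genFib m (k+1) := by
  simp only [genFib]; ring

lemma Qmat_pow_mulVec (m n : ℕ) (hm : 2 ≤ m) (hn : 2 ≤ n) (k : ℕ) :
    (Qmat m n ^ k) *ᵥ (fun _ => (1:ℝ)) =
      fun i : Fin (n-1) => ((m:ℝ)-1)^k * genFib m (k+1) ^ (i:ℕ) * genFib m k ^ (n - 2 - (i:ℕ)) := by
  induction k with
  | zero =>
    funext i
    simp [genFib, Matrix.mulVec, dotProduct, Matrix.one_apply]
  | succ k ih =>
    rw [pow_succ' (Qmat m n) k, ← Matrix.mulVec_mulVec, ih]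
    funext i
    simp only [Matrix.mulVec, dotProduct]
    have hiv : (i:ℕ) ≤ n - 2 := by have := i.isLt; omega
    simp only [Qmat_eq m n hn]
    rw [Fin.sum_univ_eq_sum_range (fun j => (Nat.choose i.val (n - 2 - j) : ℝ) *
      ((m:ℝ)-1) ^ (n - 2 - j + 1) *
      (((m:ℝ)-1)^k * genFib m (k+1) ^ j * genFib m k ^ (n - 2 - j))) (n-1)]
    rw [← Finset.sum_range_reflect]
    rw [show n - 1 - 1 = n - 2 from by omega]
    have hsub : Finset.range ((i:ℕ)+1) ⊆ Finset.range (n-1) :=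
      Finset.range_subset_range.mpr (by omega)
    rw [← Finset.sum_subset hsub (fun t ht hnt => by
      have h1 : (i:ℕ) < t := by
        simp only [Finset.mem_range] at ht hnt; omega
      have ht2 : t ≤ n - 2 := by simp only [Finset.mem_range] at ht; omega
      rw [show n - 2 - (n - 2 - t) = t from by omega, Nat.choose_eq_zero_of_lt h1]
      simp)]
    rw [show genFib m (k+1+1) = ((m:ℝ)-1) * genFib m k + genFib m (k+1) from
      genFib_succ_succ m k, add_pow]
    rw [Finset.mul_sum, Finset.sum_mul]
    refine Finset.sum_congr rfl fun t ht => ?_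
    have ht' : t ≤ (i:ℕ) := by simp only [Finset.mem_range] at ht; omega
    rw [show n - 2 - (n - 2 - t) = t from by omega,
      show n - 2 - t = ((i:ℕ) - t) + (n - 2 - (i:ℕ)) from by omega, pow_add]
    rw [mul_pow]
    ring

lemma vand_swap (N : ℕ) (γ : ℕ → ℝ) :
    ∏ i : Fin N, ∏ j ∈ Finset.Ioi i, (γ (j:ℕ) - γ (i:ℕ))
      = ∏ l ∈ Finset.range N, ∏ r ∈ Finset.range l, (γ l - γ r) := by
  rw [Finset.prod_comm' (t' := (Finset.univ : Finset (Fin N)))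
    (s' := fun y => Finset.Iio y) (fun x y => by simp)]
  rw [← Fin.prod_univ_eq_prod_range (fun l => ∏ r ∈ Finset.range l, (γ l - γ r)) N]
  refine Finset.prod_congr rfl fun j _ => ?_
  rw [← Nat.Iio_eq_range, ← Fin.map_valEmbedding_Iio, Finset.prod_map]
  rfl

/-- Determinant formula for the walk matrix of `Q[m,n]`:
`det W(Q[m,n]) = (∏_{0 ≤ r < l ≤ n−2} (γ_l − γ_r)) · (∏_{k=0}^{n−2} C_k)`,
where `γ_k = F_{m,k+1}/F_{m,k}` and `C_k = (m−1)^k F_{m,k}^{n−2}`. -/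
theorem walkMatrix_Qmat_det (m n : ℕ) (hm : 2 ≤ m) (hn : 2 ≤ n) :
    (walkMatrix (Qmat m n)).det
      = (∏ l ∈ Finset.range (n - 1), ∏ r ∈ Finset.range l,
          (genFib m (l + 1) / genFib m l - genFib m (r + 1) / genFib m r)) *
        ∏ k ∈ Finset.range (n - 1), ((m : ℝ) - 1) ^ k * (genFib m k) ^ (n - 2) := by
  have hW : walkMatrix (Qmat m n) =
      (Matrix.vandermonde (fun k : Fin (n-1) => genFib m ((k:ℕ)+1) / genFib m (k:ℕ)))ᵀ *
      Matrix.diagonal (fun k : Fin (n-1) => ((m:ℝ)-1)^(k:ℕ) * genFib m (k:ℕ) ^ (n-2)) := by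
    funext i k
    have h1 : walkMatrix (Qmat m n) i k = ((Qmat m n ^ (k:ℕ)) *ᵥ fun _ => (1:ℝ)) i := rfl
    rw [h1, Qmat_pow_mulVec m n hm hn, Matrix.mul_diagonal, Matrix.transpose_apply,
      Matrix.vandermonde_apply]
    have hF : genFib m (k:ℕ) ≠ 0 := ne_of_gt (genFib_pos m hm _)
    have hiv : (i:ℕ) ≤ n - 2 := by have := i.isLt; omega
    have key : genFib m (k:ℕ) ^ (n-2-(i:ℕ)) * genFib m (k:ℕ) ^ (i:ℕ)
        = genFib m (k:ℕ) ^ (n-2) := by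
      rw [← pow_add]; congr 1; omega
    show ((m:ℝ)-1) ^ (k:ℕ) * genFib m ((k:ℕ)+1) ^ (i:ℕ) * genFib m (k:ℕ) ^ (n-2-(i:ℕ))
      = (genFib m ((k:ℕ)+1) / genFib m (k:ℕ)) ^ (i:ℕ) *
        (((m:ℝ)-1) ^ (k:ℕ) * genFib m (k:ℕ) ^ (n-2))
    rw [div_pow, ← key]
    field_simp
  rw [hW, Matrix.det_mul, Matrix.det_transpose, Matrix.det_vandermonde, Matrix.det_diagonal]
  rw [vand_swap (n-1) (fun l => genFib m (l+1) / genFib m l)]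
  rw [Fin.prod_univ_eq_prod_range (fun k => ((m:ℝ)-1)^k * genFib m k ^ (n-2)) (n-1)]
end
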